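/- arXiv:2602.05888 — 7 statements merged into one kernel-verified Lean document; each statement's English description precedes it below -/
import Mathlib

section
/- For each of the Average, Max, and Cutoff_λ cost functions (for any λ > 0), every sorted coalition structure is swap stable: in a sorted coalition structure no two agents can both strictly decrease their cost by exchanging their coalitions. -/
open Finset

noncomputable section

/-- The coalition with index `c` of the coalition structure given by the assignment `P`
(coalition structures with at most `k` coalitions are modeled as assignments
`P : Fin n → Fin k` of the agents to coalition indices; indices whose coalition is
empty do not count as coalitions). -/
def coal {n k : ℕ} (P : Fin n → Fin k) (c : Fin k) : Finset (Fin n) :=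
  Finset.univ.filter (fun i => P i = c)

/-- Average cost of agent `i` in its coalition: the average distance to the other members.
(An agent alone in its coalition has cost `0/0 = 0`, the happy-in-isolation convention.) -/
def costAVG {n k : ℕ} (v : Fin n → ℝ) (P : Fin n → Fin k) (i : Fin n) : ℝ :=
  (∑ j ∈ (coal P (P i)).erase i, |v i - v j|) / (((coal P (P i)).card : ℝ) - 1)

/-- Maximum cost of agent `i` in its coalition: the maximum distance to the other members.
(An agent alone in its coalition has cost `0`, the happy-in-isolation convention.) -/
def costMAX {n k : ℕ} (v : Fin n → ℝ) (P : Fin n → Fin k) (i : Fin n) : ℝ :=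
  Finset.fold max 0 (fun j => |v i - v j|) ((coal P (P i)).erase i)

/-- Cutoff cost of agent `i` in its coalition: the fraction of other members at
distance strictly more than `lam`. (An agent alone has cost `0/0 = 0`.) -/
def costCUT {n k : ℕ} (lam : ℝ) (v : Fin n → ℝ) (P : Fin n → Fin k) (i : Fin n) : ℝ :=
  ((((coal P (P i)).erase i).filter (fun j => lam < |v i - v j|)).card : ℝ) /
    (((coal P (P i)).card : ℝ) - 1)

/-- The coalition structure obtained when agents `i` and `j` exchange their coalitions. -/
def swapP {n k : ℕ} (P : Fin n → Fin k) (i j : Fin n) : Fin n → Fin k :=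
  Function.update (Function.update P i (P j)) j (P i)

/-- A coalition structure is sorted if whenever two agents lie in the same coalition,
every agent whose value lies between their values lies in that coalition as well. -/
def IsSortedStruct {n k : ℕ} (v : Fin n → ℝ) (P : Fin n → Fin k) : Prop :=
  ∀ i j l : Fin n, P i = P j → v i ≤ v l → v l ≤ v j → P l = P i

/-- The multiset of value-profiles of the coalitions of a structure (one entry per
coalition index; two structures have the same nonempty coalitions up to renaming of
agents with equal values iff their profiles agree). -/
def profile {n k : ℕ} (v : Fin n → ℝ) (P : Fin n → Fin k) : Multiset (Multiset ℝ) :=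
  (Finset.univ.val : Multiset (Fin k)).map (fun c => (coal P c).val.map v)

section MyAux

lemma swapP_apply' {n k : ℕ} (P : Fin n → Fin k) (i j l : Fin n) :
    swapP P i j l = if l = j then P i else if l = i then P j else P l := by
  simp [swapP, Function.update_apply]

lemma swapP_comm' {n k : ℕ} (P : Fin n → Fin k) (i j : Fin n) : swapP P i j = swapP P j i := by
  funext l
  by_cases h1 : l = j <;> by_cases h2 : l = i <;> simp_all [swapP_apply']

lemma swapP_self' {n k : ℕ} (P : Fin n → Fin k) (i j : Fin n) (hij : i ≠ j) :
    swapP P i j i = P j := by simp [swapP_apply', hij]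

lemma coal_swap_erase {n k : ℕ} (P : Fin n → Fin k) (i j : Fin n) (hP : P i ≠ P j) :
    (coal (swapP P i j) (swapP P i j i)).erase i = (coal P (P j)).erase j := by
  have hij : i ≠ j := fun h => hP (by rw [h])
  rw [swapP_self' P i j hij]
  ext l
  by_cases h1 : l = j <;> by_cases h2 : l = i <;>
    simp_all [coal, swapP_apply', Finset.mem_erase, eq_comm]

lemma coal_swap_card {n k : ℕ} (P : Fin n → Fin k) (i j : Fin n) (hP : P i ≠ P j) :
    (coal (swapP P i j) (swapP P i j i)).card = (coal P (P j)).card := by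
  have hi : i ∈ coal (swapP P i j) (swapP P i j i) := by simp [coal]
  have hj : j ∈ coal P (P j) := by simp [coal]
  have h1 := Finset.card_erase_of_mem hi
  have h2 := Finset.card_erase_of_mem hj
  rw [coal_swap_erase P i j hP] at h1
  have c1 : 1 ≤ (coal (swapP P i j) (swapP P i j i)).card := Finset.card_pos.2 ⟨i, hi⟩
  have c2 : 1 ≤ (coal P (P j)).card := Finset.card_pos.2 ⟨j, hj⟩
  omega

lemma pair_ineq {α : Type*} (f : α → ℝ) (x y : ℝ) (a b : α)
    (h1 : f a < f b) (h2 : x < f b) (h3 : f a < y) (h4 : x < y) :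
    |x - f a| + |y - f b| ≤ |x - f b| + |y - f a| := by
  rw [abs_of_neg (by linarith : x - f b < 0), abs_of_pos (by linarith : (0:ℝ) < y - f a)]
  rcases abs_cases (x - f a) with ⟨e1, _⟩ | ⟨e1, _⟩ <;>
    rcases abs_cases (y - f b) with ⟨e2, _⟩ | ⟨e2, _⟩ <;> rw [e1, e2] <;> linarith

lemma aux_avg {α : Type*} (f : α → ℝ) (x y : ℝ) (A B : Finset α)
    (hA : A.Nonempty) (hB : B.Nonempty) (hxy : x < y)
    (hfa : ∀ a ∈ A, f a < y) (hfb : ∀ b ∈ B, x < f b)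
    (hab : ∀ a ∈ A, ∀ b ∈ B, f a < f b) :
    ¬ ((∑ b ∈ B, |x - f b|) / (B.card : ℝ) < (∑ a ∈ A, |x - f a|) / (A.card : ℝ) ∧
       (∑ a ∈ A, |y - f a|) / (A.card : ℝ) < (∑ b ∈ B, |y - f b|) / (B.card : ℝ)) := by
  rintro ⟨h1, h2⟩
  have hp : (0:ℝ) < A.card := by exact_mod_cast Finset.card_pos.2 hA
  have hq : (0:ℝ) < B.card := by exact_mod_cast Finset.card_pos.2 hB
  rw [div_lt_div_iff₀ hq hp] at h1
  rw [div_lt_div_iff₀ hp hq] at h2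
  have hsum : ∑ a ∈ A, ∑ b ∈ B, (|x - f a| + |y - f b|)
      ≤ ∑ a ∈ A, ∑ b ∈ B, (|x - f b| + |y - f a|) :=
    Finset.sum_le_sum fun a ha => Finset.sum_le_sum fun b hb =>
      pair_ineq f x y a b (hab a ha b hb) (hfb b hb) (hfa a ha) hxy
  have e1 : ∑ a ∈ A, ∑ b ∈ B, (|x - f a| + |y - f b|)
      = (B.card : ℝ) * (∑ a ∈ A, |x - f a|) + (A.card : ℝ) * (∑ b ∈ B, |y - f b|) := by
    simp [Finset.sum_add_distrib, Finset.sum_const, nsmul_eq_mul, Finset.mul_sum]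
  have e2 : ∑ a ∈ A, ∑ b ∈ B, (|x - f b| + |y - f a|)
      = (A.card : ℝ) * (∑ b ∈ B, |x - f b|) + (B.card : ℝ) * (∑ a ∈ A, |y - f a|) := by
    simp [Finset.sum_add_distrib, Finset.sum_const, nsmul_eq_mul, Finset.mul_sum]
  rw [e1, e2] at hsum
  nlinarith

lemma aux_max {α : Type*} (f : α → ℝ) (x y : ℝ) (A B : Finset α)
    (hA : A.Nonempty) (hB : B.Nonempty) (hxy : x < y)
    (hfa : ∀ a ∈ A, f a < y) (hfb : ∀ b ∈ B, x < f b)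
    (hab : ∀ a ∈ A, ∀ b ∈ B, f a < f b) :
    ¬ (Finset.fold max 0 (fun b => |x - f b|) B < Finset.fold max 0 (fun a => |x - f a|) A ∧
       Finset.fold max 0 (fun a => |y - f a|) A < Finset.fold max 0 (fun b => |y - f b|) B) := by
  rintro ⟨h1, h2⟩
  obtain ⟨a0, ha0, ha0max⟩ := Finset.exists_max_image A (fun a => |x - f a|) hA
  obtain ⟨b0, hb0, hb0max⟩ := Finset.exists_max_image B (fun b => |y - f b|) hB
  have o1 : Finset.fold max 0 (fun a => |x - f a|) A ≤ |x - f a0| :=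
    (Finset.fold_max_le _).2 ⟨abs_nonneg _, ha0max⟩
  have o2 : Finset.fold max 0 (fun b => |y - f b|) B ≤ |y - f b0| :=
    (Finset.fold_max_le _).2 ⟨abs_nonneg _, hb0max⟩
  have n1 : |x - f b0| ≤ Finset.fold max 0 (fun b => |x - f b|) B :=
    (Finset.le_fold_max _).2 (Or.inr ⟨b0, hb0, le_refl _⟩)
  have n2 : |y - f a0| ≤ Finset.fold max 0 (fun a => |y - f a|) A :=
    (Finset.le_fold_max _).2 (Or.inr ⟨a0, ha0, le_refl _⟩)
  have := pair_ineq f x y a0 b0 (hab a0 ha0 b0 hb0) (hfb b0 hb0) (hfa a0 ha0) hxy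
  linarith

lemma aux_cut {α : Type*} (f : α → ℝ) (x y : ℝ) (lam : ℝ) (hlam : 0 < lam)
    (A B : Finset α) (hA : A.Nonempty) (hB : B.Nonempty) (hxy : x < y)
    (hfa : ∀ a ∈ A, f a < y) (hfb : ∀ b ∈ B, x < f b)
    (hab : ∀ a ∈ A, ∀ b ∈ B, f a < f b) :
    ¬ (((B.filter (fun b => lam < |x - f b|)).card : ℝ) / (B.card : ℝ) <
         ((A.filter (fun a => lam < |x - f a|)).card : ℝ) / (A.card : ℝ) ∧
       ((A.filter (fun a => lam < |y - f a|)).card : ℝ) / (A.card : ℝ) <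
         ((B.filter (fun b => lam < |y - f b|)).card : ℝ) / (B.card : ℝ)) := by
  rintro ⟨h1, h2⟩
  have hp : (0:ℝ) < A.card := by exact_mod_cast Finset.card_pos.2 hA
  have hq : (0:ℝ) < B.card := by exact_mod_cast Finset.card_pos.2 hB
  by_cases hc1 : ∃ a ∈ A, lam < f a - x
  · obtain ⟨a0, ha0, hla⟩ := hc1
    have hful : B.filter (fun b => lam < |x - f b|) = B := by
      refine Finset.filter_true_of_mem fun b hb => ?_
      have hb1 := hab a0 ha0 b hb
      rw [abs_of_neg (by linarith [hfb b hb] : x - f b < 0)]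
      linarith
    rw [hful, div_self hq.ne'] at h1
    have hle : ((A.filter (fun a => lam < |x - f a|)).card : ℝ) / (A.card : ℝ) ≤ 1 := by
      rw [div_le_one hp]
      exact_mod_cast Finset.card_filter_le _ _
    linarith
  push_neg at hc1
  by_cases hc2 : ∃ b ∈ B, lam < y - f b
  · obtain ⟨b0, hb0, hlb⟩ := hc2
    have hful : A.filter (fun a => lam < |y - f a|) = A := by
      refine Finset.filter_true_of_mem fun a ha => ?_
      have ha1 := hab a ha b0 hb0
      rw [abs_of_pos (by linarith [hfa a ha] : (0:ℝ) < y - f a)]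
      linarith
    rw [hful, div_self hp.ne'] at h2
    have hle : ((B.filter (fun b => lam < |y - f b|)).card : ℝ) / (B.card : ℝ) ≤ 1 := by
      rw [div_le_one hq]
      exact_mod_cast Finset.card_filter_le _ _
    linarith
  push_neg at hc2
  have hsub1 : A.filter (fun a => lam < |x - f a|) ⊆ A.filter (fun a => lam < |y - f a|) := by
    intro a ha
    rw [Finset.mem_filter] at ha ⊢
    obtain ⟨haA, hla⟩ := ha
    refine ⟨haA, ?_⟩
    have h4 := hc1 a haA
    have h5 : |x - f a| = x - f a := by
      rcases abs_cases (x - f a) with ⟨e, _⟩ | ⟨e, _⟩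
      · exact e
      · exfalso; rw [e] at hla; linarith
    rw [abs_of_pos (by linarith [hfa a haA] : (0:ℝ) < y - f a)]
    rw [h5] at hla; linarith
  have hsub2 : B.filter (fun b => lam < |y - f b|) ⊆ B.filter (fun b => lam < |x - f b|) := by
    intro b hb
    rw [Finset.mem_filter] at hb ⊢
    obtain ⟨hbB, hlb⟩ := hb
    refine ⟨hbB, ?_⟩
    have h4 := hc2 b hbB
    have h5 : |y - f b| = f b - y := by
      rcases abs_cases (y - f b) with ⟨e, he⟩ | ⟨e, _⟩
      · exfalso; rw [e] at hlb; linarith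
      · rw [e]; ring
    rw [abs_of_neg (by linarith [hfb b hbB] : x - f b < 0)]
    rw [h5] at hlb; linarith
  rw [div_lt_div_iff₀ hq hp] at h1
  rw [div_lt_div_iff₀ hp hq] at h2
  have m1 : ((A.filter (fun a => lam < |x - f a|)).card : ℝ) ≤
      ((A.filter (fun a => lam < |y - f a|)).card : ℝ) := by
    exact_mod_cast Finset.card_le_card hsub1
  have m2 : ((B.filter (fun b => lam < |y - f b|)).card : ℝ) ≤
      ((B.filter (fun b => lam < |x - f b|)).card : ℝ) := by
    exact_mod_cast Finset.card_le_card hsub2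
  nlinarith

lemma key_stable {n k : ℕ} (v : Fin n → ℝ) (lam : ℝ) (hlam : 0 < lam) (P : Fin n → Fin k)
    (hsize : ∀ c : Fin k, coal P c = ∅ ∨ 2 ≤ (coal P c).card)
    (hsorted : IsSortedStruct v P) (i j : Fin n) (hP : P i ≠ P j) (hvij : v i < v j) :
    (¬ (costAVG v (swapP P i j) i < costAVG v P i ∧
        costAVG v (swapP P i j) j < costAVG v P j)) ∧
    (¬ (costMAX v (swapP P i j) i < costMAX v P i ∧
        costMAX v (swapP P i j) j < costMAX v P j)) ∧
    (¬ (costCUT lam v (swapP P i j) i < costCUT lam v P i ∧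
        costCUT lam v (swapP P i j) j < costCUT lam v P j)) := by
  have sep : ∀ a b : Fin n, P a = P i → P b = P j → v a < v b := by
    intro a b ha hb
    by_contra h
    push_neg at h
    rcases le_or_gt (v i) (v b) with h1 | h1
    · have hb2 : P b = P i := hsorted i a b ha.symm h1 h
      exact hP (hb2.symm.trans hb)
    · have hb2 : P i = P b := hsorted b j i hb h1.le hvij.le
      exact hP (hb2.trans hb)
  have hiA : i ∈ coal P (P i) := by simp [coal]
  have hjB : j ∈ coal P (P j) := by simp [coal]
  have hA2 : 2 ≤ (coal P (P i)).card := by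
    rcases hsize (P i) with h | h
    · rw [h] at hiA; simp at hiA
    · exact h
  have hB2 : 2 ≤ (coal P (P j)).card := by
    rcases hsize (P j) with h | h
    · rw [h] at hjB; simp at hjB
    · exact h
  have hcA : ((coal P (P i)).erase i).card = (coal P (P i)).card - 1 :=
    Finset.card_erase_of_mem hiA
  have hcB : ((coal P (P j)).erase j).card = (coal P (P j)).card - 1 :=
    Finset.card_erase_of_mem hjB
  have hA'ne : ((coal P (P i)).erase i).Nonempty := Finset.card_pos.1 (by omega)
  have hB'ne : ((coal P (P j)).erase j).Nonempty := Finset.card_pos.1 (by omega)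
  have memA' : ∀ a ∈ (coal P (P i)).erase i, P a = P i := by
    intro a ha
    simp [coal, Finset.mem_erase] at ha
    exact ha.2
  have memB' : ∀ b ∈ (coal P (P j)).erase j, P b = P j := by
    intro b hb
    simp [coal, Finset.mem_erase] at hb
    exact hb.2
  have hab : ∀ a ∈ (coal P (P i)).erase i, ∀ b ∈ (coal P (P j)).erase j, v a < v b :=
    fun a ha b hb => sep a b (memA' a ha) (memB' b hb)
  have haj : ∀ a ∈ (coal P (P i)).erase i, v a < v j :=
    fun a ha => sep a j (memA' a ha) rfl
  have hib : ∀ b ∈ (coal P (P j)).erase j, v i < v b :=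
    fun b hb => sep i b rfl (memB' b hb)
  have hdA : ((coal P (P i)).card : ℝ) - 1 = (((coal P (P i)).erase i).card : ℝ) := by
    rw [hcA, Nat.cast_sub (by omega)]
    norm_num
  have hdB : ((coal P (P j)).card : ℝ) - 1 = (((coal P (P j)).erase j).card : ℝ) := by
    rw [hcB, Nat.cast_sub (by omega)]
    norm_num
  have eAVGi : costAVG v (swapP P i j) i
      = (∑ b ∈ (coal P (P j)).erase j, |v i - v b|) / (((coal P (P j)).erase j).card : ℝ) := by
    unfold costAVG
    rw [coal_swap_erase P i j hP, coal_swap_card P i j hP, hdB]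
  have eAVGi' : costAVG v P i
      = (∑ a ∈ (coal P (P i)).erase i, |v i - v a|) / (((coal P (P i)).erase i).card : ℝ) := by
    unfold costAVG
    rw [hdA]
  have eAVGj : costAVG v (swapP P i j) j
      = (∑ a ∈ (coal P (P i)).erase i, |v j - v a|) / (((coal P (P i)).erase i).card : ℝ) := by
    unfold costAVG
    rw [swapP_comm' P i j, coal_swap_erase P j i (Ne.symm hP), coal_swap_card P j i (Ne.symm hP), hdA]
  have eAVGj' : costAVG v P j
      = (∑ b ∈ (coal P (P j)).erase j, |v j - v b|) / (((coal P (P j)).erase j).card : ℝ) := by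
    unfold costAVG
    rw [hdB]
  have eMAXi : costMAX v (swapP P i j) i
      = Finset.fold max 0 (fun b => |v i - v b|) ((coal P (P j)).erase j) := by
    unfold costMAX
    rw [coal_swap_erase P i j hP]
  have eMAXi' : costMAX v P i
      = Finset.fold max 0 (fun a => |v i - v a|) ((coal P (P i)).erase i) := rfl
  have eMAXj : costMAX v (swapP P i j) j
      = Finset.fold max 0 (fun a => |v j - v a|) ((coal P (P i)).erase i) := by
    unfold costMAX
    rw [swapP_comm' P i j, coal_swap_erase P j i (Ne.symm hP)]
  have eMAXj' : costMAX v P j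
      = Finset.fold max 0 (fun b => |v j - v b|) ((coal P (P j)).erase j) := rfl
  have eCUTi : costCUT lam v (swapP P i j) i
      = ((((coal P (P j)).erase j).filter (fun b => lam < |v i - v b|)).card : ℝ) /
          (((coal P (P j)).erase j).card : ℝ) := by
    unfold costCUT
    rw [coal_swap_erase P i j hP, coal_swap_card P i j hP, hdB]
  have eCUTi' : costCUT lam v P i
      = ((((coal P (P i)).erase i).filter (fun a => lam < |v i - v a|)).card : ℝ) /
          (((coal P (P i)).erase i).card : ℝ) := by
    unfold costCUT
    rw [hdA]
  have eCUTj : costCUT lam v (swapP P i j) j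
      = ((((coal P (P i)).erase i).filter (fun a => lam < |v j - v a|)).card : ℝ) /
          (((coal P (P i)).erase i).card : ℝ) := by
    unfold costCUT
    rw [swapP_comm' P i j, coal_swap_erase P j i (Ne.symm hP), coal_swap_card P j i (Ne.symm hP), hdA]
  have eCUTj' : costCUT lam v P j
      = ((((coal P (P j)).erase j).filter (fun b => lam < |v j - v b|)).card : ℝ) /
          (((coal P (P j)).erase j).card : ℝ) := by
    unfold costCUT
    rw [hdB]
  refine ⟨?_, ?_, ?_⟩
  · rw [eAVGi, eAVGi', eAVGj, eAVGj']
    exact aux_avg v (v i) (v j) _ _ hA'ne hB'ne hvij haj hib hab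
  · rw [eMAXi, eMAXi', eMAXj, eMAXj']
    exact aux_max v (v i) (v j) _ _ hA'ne hB'ne hvij haj hib hab
  · rw [eCUTi, eCUTi', eCUTj, eCUTj']
    exact aux_cut v (v i) (v j) lam hlam _ _ hA'ne hB'ne hvij haj hib hab

end MyAux

/-- for each of the Average, Max, and Cutoff_λ (λ > 0) cost functions,
every sorted coalition structure (of a swap game, where every coalition has at least
two agents) is swap stable: no two agents in different coalitions can both strictly
decrease their cost by exchanging coalitions. -/
theorem sorted_structures_are_swap_stable {n k : ℕ} (v : Fin n → ℝ) (hv : Monotone v)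
    (lam : ℝ) (hlam : 0 < lam) (P : Fin n → Fin k)
    (hsize : ∀ c : Fin k, coal P c = ∅ ∨ 2 ≤ (coal P c).card)
    (hsorted : IsSortedStruct v P) :
    ∀ i j : Fin n, P i ≠ P j →
      (¬ (costAVG v (swapP P i j) i < costAVG v P i ∧
          costAVG v (swapP P i j) j < costAVG v P j)) ∧
      (¬ (costMAX v (swapP P i j) i < costMAX v P i ∧
          costMAX v (swapP P i j) j < costMAX v P j)) ∧
      (¬ (costCUT lam v (swapP P i j) i < costCUT lam v P i ∧
          costCUT lam v (swapP P i j) j < costCUT lam v P j)) := by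
  intro i j hP
  rcases lt_trichotomy (v i) (v j) with h | h | h
  · exact key_stable v lam hlam P hsize hsorted i j hP h
  · exact absurd (hsorted i i j rfl h.le h.ge).symm hP
  · obtain ⟨t1, t2, t3⟩ := key_stable v lam hlam P hsize hsorted j i (Ne.symm hP) h
    rw [swapP_comm' P j i] at t1 t2 t3
    exact ⟨fun ⟨x, y⟩ => t1 ⟨y, x⟩, fun ⟨x, y⟩ => t2 ⟨y, x⟩, fun ⟨x, y⟩ => t3 ⟨y, x⟩⟩
end
end

section
/- In every Max-Jump game, in both the HIS and the UIS setting, every sequence of improving jumps is finite; in particular every Max-Jump-HIS game and every Max-Jump-UIS game has a jump-stable coalition structure. -/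
open Finset

noncomputable section

/-- Maximum cost in the unhappy-in-isolation (UIS) setting: an agent alone in its
coalition has cost `⊤`. (Hence a jump into an empty coalition is never improving,
while an agent alone always improves by joining a nonempty coalition.) -/
def costMaxUIS {n k : ℕ} (v : Fin n → ℝ) (P : Fin n → Fin k) (i : Fin n) : EReal :=
  if (coal P (P i)).card ≤ 1 then ⊤ else (costMAX v P i : EReal)

namespace MaxJumpAux

variable {n k : ℕ}

/-- the finite set of possible distances -/
def distSet (v : Fin n → ℝ) : Finset ℝ :=
  Finset.image (fun p : Fin n × Fin n => |v p.1 - v p.2|) Finset.univ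

/-- geometric weight of a distance -/
def wt (v : Fin n → ℝ) (d : ℝ) : ℕ :=
  (n * n + 1) ^ ((distSet v).filter (fun x => x < d)).card

def pairSet (P : Fin n → Fin k) : Finset (Fin n × Fin n) :=
  Finset.univ.filter (fun p => p.1 ≠ p.2 ∧ P p.1 = P p.2)

def phiPair (v : Fin n → ℝ) (P : Fin n → Fin k) : ℕ :=
  ∑ p ∈ pairSet P, wt v |v p.1 - v p.2|

def neCount (P : Fin n → Fin k) : ℕ :=
  (Finset.univ.filter (fun c : Fin k => (coal P c).Nonempty)).card

def BIG (n : ℕ) : ℕ := n * n * (n * n + 1) ^ (n * n) + 1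

def phiU (v : Fin n → ℝ) (P : Fin n → Fin k) : ℕ := neCount P * BIG n + phiPair v P

lemma fold_nonneg (s : Finset (Fin n)) (f : Fin n → ℝ) : 0 ≤ s.fold max 0 f :=
  (Finset.le_fold_max _).mpr (Or.inl le_rfl)

lemma le_fold (s : Finset (Fin n)) (f : Fin n → ℝ) {j : Fin n} (hj : j ∈ s) :
    f j ≤ s.fold max 0 f :=
  (Finset.le_fold_max _).mpr (Or.inr ⟨j, hj, le_rfl⟩)

lemma exists_of_fold_pos {s : Finset (Fin n)} {f : Fin n → ℝ} (h : 0 < s.fold max 0 f) :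
    ∃ j ∈ s, s.fold max 0 f ≤ f j := by
  by_contra hcon
  push_neg at hcon
  exact absurd ((Finset.fold_max_lt _).mpr ⟨h, hcon⟩) (lt_irrefl _)

lemma wt_mono (v : Fin n → ℝ) {d d' : ℝ} (h : d ≤ d') : wt v d ≤ wt v d' :=
  Nat.pow_le_pow_right (Nat.succ_le_succ (Nat.zero_le _))
    (Finset.card_le_card (fun x hx => by
      simp only [Finset.mem_filter] at hx ⊢
      exact ⟨hx.1, lt_of_lt_of_le hx.2 h⟩))

lemma costMAX_nonneg (v : Fin n → ℝ) (P : Fin n → Fin k) (i : Fin n) :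
    0 ≤ costMAX v P i := by
  unfold costMAX; exact fold_nonneg _ _

lemma le_costMAX (v : Fin n → ℝ) (P : Fin n → Fin k) (i : Fin n) {j : Fin n}
    (hj : j ∈ (coal P (P i)).erase i) : |v i - v j| ≤ costMAX v P i := by
  unfold costMAX; exact le_fold _ (fun j => |v i - v j|) hj

lemma exists_costMAX (v : Fin n → ℝ) (P : Fin n → Fin k) (i : Fin n)
    (h : 0 < costMAX v P i) :
    ∃ j ∈ (coal P (P i)).erase i, costMAX v P i ≤ |v i - v j| := by
  unfold costMAX at h ⊢; exact exists_of_fold_pos h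

/-- key arithmetic lemma -/
lemma sum_wt_lt (v : Fin n → ℝ) (A B : Finset (Fin n)) (i : Fin n) (a : ℝ)
    (hA : ∃ j ∈ A, a ≤ |v i - v j|)
    (hB : ∀ j ∈ B, |v i - v j| < a) (ha : 0 < a) :
    ∑ j ∈ B, wt v |v i - v j| < ∑ j ∈ A, wt v |v i - v j| := by
  set ra : ℕ := ((distSet v).filter (fun x => x < a)).card with hra
  have hmem0 : (0 : ℝ) ∈ (distSet v).filter (fun x => x < a) := by
    refine Finset.mem_filter.mpr ⟨?_, ha⟩
    exact Finset.mem_image.mpr ⟨(i, i), Finset.mem_univ _, by simp⟩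
  have hra1 : 1 ≤ ra := Finset.card_pos.mpr ⟨0, hmem0⟩
  -- each term of B is small
  have hsmall : ∀ j ∈ B, wt v |v i - v j| ≤ (n * n + 1) ^ (ra - 1) := by
    intro j hj
    have hdj : |v i - v j| ∈ distSet v :=
      Finset.mem_image.mpr ⟨(i, j), Finset.mem_univ _, rfl⟩
    have hcard : ((distSet v).filter (fun x => x < |v i - v j|)).card < ra := by
      apply Finset.card_lt_card
      constructor
      · intro x hx
        simp only [Finset.mem_filter] at hx ⊢
        exact ⟨hx.1, lt_trans hx.2 (hB j hj)⟩
      · intro hsub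
        have : |v i - v j| ∈ (distSet v).filter (fun x => x < |v i - v j|) :=
          hsub (Finset.mem_filter.mpr ⟨hdj, hB j hj⟩)
        exact absurd (Finset.mem_filter.mp this).2 (lt_irrefl _)
    exact Nat.pow_le_pow_right (Nat.succ_le_succ (Nat.zero_le _)) (Nat.le_sub_one_of_lt hcard)
  have hBsum : ∑ j ∈ B, wt v |v i - v j| ≤ B.card * (n * n + 1) ^ (ra - 1) := by
    calc ∑ j ∈ B, wt v |v i - v j| ≤ ∑ _j ∈ B, (n * n + 1) ^ (ra - 1) :=
          Finset.sum_le_sum hsmall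
      _ = B.card * (n * n + 1) ^ (ra - 1) := by rw [Finset.sum_const, smul_eq_mul]
  have hcardB : B.card ≤ n := by
    calc B.card ≤ (Finset.univ : Finset (Fin n)).card := Finset.card_le_card (Finset.subset_univ _)
      _ = n := by simp
  have hstep : B.card * (n * n + 1) ^ (ra - 1) < (n * n + 1) ^ ra := by
    have hpow : 0 < (n * n + 1) ^ (ra - 1) := Nat.pow_pos (Nat.succ_le_succ (Nat.zero_le _))
    have hn : B.card < n * n + 1 := by nlinarith
    calc B.card * (n * n + 1) ^ (ra - 1) < (n * n + 1) * (n * n + 1) ^ (ra - 1) :=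
          (Nat.mul_lt_mul_right hpow).mpr hn
      _ = (n * n + 1) ^ (ra - 1 + 1) := by ring
      _ = (n * n + 1) ^ ra := by congr 1; omega
  obtain ⟨j0, hj0A, hj0⟩ := hA
  have hAsum : (n * n + 1) ^ ra ≤ ∑ j ∈ A, wt v |v i - v j| := by
    have h1 : (n * n + 1) ^ ra ≤ wt v |v i - v j0| := wt_mono v hj0
    calc (n * n + 1) ^ ra ≤ wt v |v i - v j0| := h1
      _ ≤ ∑ j ∈ A, wt v |v i - v j| :=
          Finset.single_le_sum (f := fun j => wt v |v i - v j|) (fun j _ => Nat.zero_le _) hj0A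
  omega

lemma filter_fst_eq (P : Fin n → Fin k) (i : Fin n) :
    (pairSet P).filter (fun p => p.1 = i) =
      ((coal P (P i)).erase i).image (fun j => (i, j)) := by
  ext ⟨x, y⟩
  simp only [pairSet, coal, Finset.mem_filter, Finset.mem_univ, true_and, Finset.mem_image,
    Finset.mem_erase]
  constructor
  · rintro ⟨⟨hxy, hP⟩, rfl⟩
    exact ⟨y, ⟨fun h => hxy h.symm, hP.symm⟩, rfl⟩
  · rintro ⟨j, ⟨hji, hPj⟩, h⟩
    obtain ⟨rfl, rfl⟩ := Prod.mk.injEq .. ▸ h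
    exact ⟨⟨fun h => hji h.symm, hPj.symm⟩, rfl⟩

lemma filter_snd_eq (P : Fin n → Fin k) (i : Fin n) :
    (pairSet P).filter (fun p => p.1 ≠ i ∧ p.2 = i) =
      ((coal P (P i)).erase i).image (fun j => (j, i)) := by
  ext ⟨x, y⟩
  simp only [pairSet, coal, Finset.mem_filter, Finset.mem_univ, true_and, Finset.mem_image,
    Finset.mem_erase]
  constructor
  · rintro ⟨⟨hxy, hP⟩, hxi, rfl⟩
    exact ⟨x, ⟨hxi, hP⟩, rfl⟩
  · rintro ⟨j, ⟨hji, hPj⟩, h⟩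
    obtain ⟨rfl, rfl⟩ := Prod.mk.injEq .. ▸ h
    exact ⟨⟨hji, hPj⟩, hji, rfl⟩

lemma phiPair_split (v : Fin n → ℝ) (P : Fin n → Fin k) (i : Fin n) :
    phiPair v P =
      (∑ p ∈ (pairSet P).filter (fun p => p.1 ≠ i ∧ p.2 ≠ i), wt v |v p.1 - v p.2|)
      + ((∑ j ∈ (coal P (P i)).erase i, wt v |v i - v j|)
         + (∑ j ∈ (coal P (P i)).erase i, wt v |v i - v j|)) := by
  classical
  have h1 : phiPair v P =
      (∑ p ∈ (pairSet P).filter (fun p => p.1 = i), wt v |v p.1 - v p.2|)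
      + ∑ p ∈ (pairSet P).filter (fun p => ¬ p.1 = i), wt v |v p.1 - v p.2| :=
    (Finset.sum_filter_add_sum_filter_not _ _ _).symm
  have h2 : ∑ p ∈ (pairSet P).filter (fun p => ¬ p.1 = i), wt v |v p.1 - v p.2|
      = (∑ p ∈ ((pairSet P).filter (fun p => ¬ p.1 = i)).filter (fun p => p.2 = i),
          wt v |v p.1 - v p.2|)
        + ∑ p ∈ ((pairSet P).filter (fun p => ¬ p.1 = i)).filter (fun p => ¬ p.2 = i),
          wt v |v p.1 - v p.2| :=
    (Finset.sum_filter_add_sum_filter_not _ _ _).symm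
  have e1 : ((pairSet P).filter (fun p => ¬ p.1 = i)).filter (fun p => p.2 = i)
      = (pairSet P).filter (fun p => p.1 ≠ i ∧ p.2 = i) := by
    rw [Finset.filter_filter]
  have e2 : ((pairSet P).filter (fun p => ¬ p.1 = i)).filter (fun p => ¬ p.2 = i)
      = (pairSet P).filter (fun p => p.1 ≠ i ∧ p.2 ≠ i) := by
    rw [Finset.filter_filter]
  have s1 : ∑ p ∈ (pairSet P).filter (fun p => p.1 = i), wt v |v p.1 - v p.2|
      = ∑ j ∈ (coal P (P i)).erase i, wt v |v i - v j| := by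
    rw [filter_fst_eq, Finset.sum_image (fun a _ b _ h => by
      simpa using congrArg Prod.snd h)]
  have s2 : ∑ p ∈ (pairSet P).filter (fun p => p.1 ≠ i ∧ p.2 = i), wt v |v p.1 - v p.2|
      = ∑ j ∈ (coal P (P i)).erase i, wt v |v i - v j| := by
    rw [filter_snd_eq, Finset.sum_image (fun a _ b _ h => by
      simpa using congrArg Prod.fst h)]
    exact Finset.sum_congr rfl (fun j _ => by rw [abs_sub_comm])
  rw [h1, h2, e1, e2, s1, s2]
  ring

lemma coal_update_of_ne (P : Fin n → Fin k) (i : Fin n) (c d : Fin k)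
    (hdc : d ≠ c) (hdi : d ≠ P i) : coal (Function.update P i c) d = coal P d := by
  ext j
  simp only [coal, Finset.mem_filter, Finset.mem_univ, true_and]
  rcases eq_or_ne j i with rfl | hj
  · simp [Function.update_self, hdc.symm, hdi.symm]
  · rw [Function.update_of_ne hj]

lemma pair_filter_eq (P : Fin n → Fin k) (i : Fin n) (c : Fin k) :
    (pairSet (Function.update P i c)).filter (fun p => p.1 ≠ i ∧ p.2 ≠ i)
      = (pairSet P).filter (fun p => p.1 ≠ i ∧ p.2 ≠ i) := by
  ext ⟨x, y⟩
  simp only [pairSet, Finset.mem_filter, Finset.mem_univ, true_and]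
  constructor
  · rintro ⟨⟨hxy, hP⟩, hx, hy⟩
    rw [Function.update_of_ne hx, Function.update_of_ne hy] at hP
    exact ⟨⟨hxy, hP⟩, hx, hy⟩
  · rintro ⟨⟨hxy, hP⟩, hx, hy⟩
    rw [← Function.update_of_ne hx c P, ← Function.update_of_ne hy c P] at hP
    exact ⟨⟨hxy, hP⟩, hx, hy⟩

lemma coal_update_self (P : Fin n → Fin k) (i : Fin n) (c : Fin k) :
    (coal (Function.update P i c) (Function.update P i c i)).erase i
      = (coal P c).erase i := by
  ext j
  simp only [coal, Finset.mem_erase, Finset.mem_filter, Finset.mem_univ, true_and,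
    Function.update_self]
  constructor
  · rintro ⟨hji, hj⟩
    rw [Function.update_of_ne hji] at hj
    exact ⟨hji, hj⟩
  · rintro ⟨hji, hj⟩
    exact ⟨hji, by rw [Function.update_of_ne hji]; exact hj⟩

/-- HIS key lemma: an improving Max jump decreases the pair potential. -/
lemma phiPair_jump (v : Fin n → ℝ) {P : Fin n → Fin k} {i : Fin n} {c : Fin k}
    (h : costMAX v (Function.update P i c) i < costMAX v P i) :
    phiPair v (Function.update P i c) < phiPair v P := by
  have ha : 0 < costMAX v P i :=
    lt_of_le_of_lt (costMAX_nonneg v (Function.update P i c) i) h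
  have hAex := exists_costMAX v P i ha
  have hBlt : ∀ j ∈ (coal (Function.update P i c) (Function.update P i c i)).erase i,
      |v i - v j| < costMAX v P i :=
    fun j hj => lt_of_le_of_lt (le_costMAX v _ i hj) h
  have hsum := sum_wt_lt v ((coal P (P i)).erase i)
    ((coal (Function.update P i c) (Function.update P i c i)).erase i) i
    (costMAX v P i) hAex hBlt ha
  set P' := Function.update P i c with hP'
  have split1 := phiPair_split v P i
  have split2 := phiPair_split v P' i
  have hfilter : (pairSet P').filter (fun p => p.1 ≠ i ∧ p.2 ≠ i)
      = (pairSet P).filter (fun p => p.1 ≠ i ∧ p.2 ≠ i) := pair_filter_eq P i c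
  rw [split1, split2, hfilter]
  omega

lemma mem_coal_self (P : Fin n → Fin k) (i : Fin n) : i ∈ coal P (P i) := by
  simp [coal]

lemma coal_nonempty_of_two_le {P : Fin n → Fin k} {i : Fin n} {c : Fin k}
    (h2 : 2 ≤ (coal (Function.update P i c) (Function.update P i c i)).card) :
    (coal P c).Nonempty := by
  set P' := Function.update P i c with hP'
  have hPi : P' i = c := Function.update_self i c P
  rw [hPi] at h2
  obtain ⟨x, hx, y, hy, hxy⟩ := Finset.one_lt_card.mp h2
  simp only [coal, Finset.mem_filter, Finset.mem_univ, true_and] at hx hy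
  rcases eq_or_ne x i with hxi | hxi
  · have hyi : y ≠ i := fun h => hxy (hxi.trans h.symm)
    refine ⟨y, ?_⟩
    simp only [coal, Finset.mem_filter, Finset.mem_univ, true_and]
    rw [← Function.update_of_ne hyi c P]; exact hy
  · refine ⟨x, ?_⟩
    simp only [coal, Finset.mem_filter, Finset.mem_univ, true_and]
    rw [← Function.update_of_ne hxi c P]; exact hx

lemma neCount_le {P : Fin n → Fin k} {i : Fin n} {c : Fin k}
    (hB : (coal P c).Nonempty) : neCount (Function.update P i c) ≤ neCount P := by
  apply Finset.card_le_card
  intro d hd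
  simp only [Finset.mem_filter, Finset.mem_univ, true_and] at hd ⊢
  obtain ⟨j, hj⟩ := hd
  simp only [coal, Finset.mem_filter, Finset.mem_univ, true_and] at hj
  rcases eq_or_ne j i with rfl | hji
  · rw [Function.update_self] at hj
    subst hj; exact hB
  · rw [Function.update_of_ne hji] at hj
    exact ⟨j, by simp [coal, hj]⟩

lemma neCount_lt {P : Fin n → Fin k} {i : Fin n} {c : Fin k} (hc : c ≠ P i)
    (hB : (coal P c).Nonempty) (hA : coal P (P i) = {i}) :
    neCount (Function.update P i c) < neCount P := by
  have hsub : (Finset.univ.filter (fun d : Fin k => (coal (Function.update P i c) d).Nonempty))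
      ⊆ (Finset.univ.filter (fun d : Fin k => (coal P d).Nonempty)).erase (P i) := by
    intro d hd
    simp only [Finset.mem_filter, Finset.mem_univ, true_and] at hd
    obtain ⟨j, hj⟩ := hd
    simp only [coal, Finset.mem_filter, Finset.mem_univ, true_and] at hj
    have hdPi : d ≠ P i := by
      rintro rfl
      rcases eq_or_ne j i with rfl | hji
      · rw [Function.update_self] at hj; exact hc hj
      · rw [Function.update_of_ne hji] at hj
        have : j ∈ coal P (P i) := by simp [coal, hj]
        rw [hA, Finset.mem_singleton] at this
        exact hji this
    refine Finset.mem_erase.mpr ⟨hdPi, ?_⟩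
    simp only [Finset.mem_filter, Finset.mem_univ, true_and]
    rcases eq_or_ne j i with rfl | hji
    · rw [Function.update_self] at hj; subst hj; exact hB
    · rw [Function.update_of_ne hji] at hj
      exact ⟨j, by simp [coal, hj]⟩
  calc neCount (Function.update P i c)
      ≤ ((Finset.univ.filter (fun d : Fin k => (coal P d).Nonempty)).erase (P i)).card :=
        Finset.card_le_card hsub
    _ < neCount P := Finset.card_erase_lt_of_mem (by
        simp only [Finset.mem_filter, Finset.mem_univ, true_and]
        exact ⟨i, mem_coal_self P i⟩)

lemma phiPair_lt_BIG (v : Fin n → ℝ) (P : Fin n → Fin k) : phiPair v P < BIG n := by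
  have hwt : ∀ p : Fin n × Fin n, wt v |v p.1 - v p.2| ≤ (n * n + 1) ^ (n * n) := by
    intro p
    apply Nat.pow_le_pow_right (Nat.succ_le_succ (Nat.zero_le _))
    calc ((distSet v).filter (fun x => x < |v p.1 - v p.2|)).card
        ≤ (distSet v).card := Finset.card_le_card (Finset.filter_subset _ _)
      _ ≤ (Finset.univ : Finset (Fin n × Fin n)).card := Finset.card_image_le
      _ = n * n := by simp
  have hcard : (pairSet P).card ≤ n * n := by
    calc (pairSet P).card ≤ (Finset.univ : Finset (Fin n × Fin n)).card :=
          Finset.card_le_card (Finset.subset_univ _)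
      _ = n * n := by simp
  have : phiPair v P ≤ (pairSet P).card * (n * n + 1) ^ (n * n) := by
    calc phiPair v P ≤ ∑ _p ∈ pairSet P, (n * n + 1) ^ (n * n) :=
          Finset.sum_le_sum (fun p _ => hwt p)
      _ = (pairSet P).card * (n * n + 1) ^ (n * n) := by rw [Finset.sum_const, smul_eq_mul]
  have h2 : (pairSet P).card * (n * n + 1) ^ (n * n) ≤ n * n * (n * n + 1) ^ (n * n) :=
    Nat.mul_le_mul_right _ hcard
  unfold BIG
  omega

/-- UIS key lemma -/
lemma phiU_jump (v : Fin n → ℝ) {P : Fin n → Fin k} {i : Fin n} {c : Fin k} (hc : c ≠ P i)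
    (h : costMaxUIS v (Function.update P i c) i < costMaxUIS v P i) :
    phiU v (Function.update P i c) < phiU v P := by
  set P' := Function.update P i c with hP'
  have hnew : ¬ (coal P' (P' i)).card ≤ 1 := by
    intro hle
    rw [costMaxUIS, if_pos hle] at h
    exact not_top_lt h
  rw [costMaxUIS, if_neg hnew] at h
  have h2 : 2 ≤ (coal P' (P' i)).card := by omega
  have hB : (coal P c).Nonempty := coal_nonempty_of_two_le h2
  by_cases hold : (coal P (P i)).card ≤ 1
  · -- old coalition is a singleton
    have hA : coal P (P i) = {i} := by
      apply Finset.eq_singleton_iff_unique_mem.mpr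
      refine ⟨mem_coal_self P i, fun j hj => ?_⟩
      by_contra hji
      have : 1 < (coal P (P i)).card := Finset.one_lt_card.mpr ⟨j, hj, i, mem_coal_self P i, hji⟩
      omega
    have hlt : neCount P' < neCount P := neCount_lt hc hB hA
    have hpb : phiPair v P' < BIG n := phiPair_lt_BIG v P'
    have hb1 : 1 ≤ BIG n := by unfold BIG; omega
    calc phiU v P' = neCount P' * BIG n + phiPair v P' := rfl
      _ < neCount P' * BIG n + BIG n := by omega
      _ = (neCount P' + 1) * BIG n := by ring
      _ ≤ neCount P * BIG n := Nat.mul_le_mul_right _ hlt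
      _ ≤ phiU v P := Nat.le_add_right _ _
  · rw [costMaxUIS, if_neg hold] at h
    have hreal : costMAX v P' i < costMAX v P i := by exact_mod_cast h
    have hpair : phiPair v P' < phiPair v P := phiPair_jump v hreal
    have hle : neCount P' ≤ neCount P := neCount_le hB
    have := Nat.mul_le_mul_right (BIG n) hle
    unfold phiU
    omega

lemma no_decreasing_seq {α : Type*} (Φ : α → ℕ) (f : ℕ → α)
    (h : ∀ t, Φ (f (t + 1)) < Φ (f t)) : False := by
  have key : ∀ t, Φ (f t) + t ≤ Φ (f 0) := by
    intro t
    induction t with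
    | zero => omega
    | succ t ih => have := h t; omega
  have := key (Φ (f 0) + 1)
  omega

lemma exists_stable_of_noseq {α : Type*} [Nonempty α] (R : α → α → Prop)
    (h : ¬ ∃ f : ℕ → α, ∀ t, R (f t) (f (t + 1))) : ∃ P : α, ∀ Q, ¬ R P Q := by
  by_contra hs
  push_neg at hs
  choose g hg using hs
  obtain ⟨a0⟩ := ‹Nonempty α›
  refine h ⟨fun t => g^[t] a0, fun t => ?_⟩
  show R (g^[t] a0) (g^[t + 1] a0)
  rw [Function.iterate_succ_apply']
  exact hg _

end MaxJumpAux

/-- in every Max-Jump game (values `v`, at most `k` coalitions), both in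
the HIS and in the UIS setting, there is no infinite sequence of improving jumps;
in particular a jump-stable coalition structure exists in both settings. -/


theorem maxJump_FIP_and_equilibrium_exists {n k : ℕ} (hk : 0 < k)
    (v : Fin n → ℝ) (hv : Monotone v) :
    -- HIS: every sequence of improving jumps is finite
    (¬ ∃ f : ℕ → (Fin n → Fin k), ∀ t : ℕ, ∃ (i : Fin n) (c : Fin k),
        c ≠ f t i ∧ f (t + 1) = Function.update (f t) i c ∧
        costMAX v (f (t + 1)) i < costMAX v (f t) i) ∧
    -- UIS: every sequence of improving jumps is finite
    (¬ ∃ f : ℕ → (Fin n → Fin k), ∀ t : ℕ, ∃ (i : Fin n) (c : Fin k),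
        c ≠ f t i ∧ f (t + 1) = Function.update (f t) i c ∧
        costMaxUIS v (f (t + 1)) i < costMaxUIS v (f t) i) ∧
    -- HIS: a jump-stable coalition structure exists
    (∃ P : Fin n → Fin k, ∀ (i : Fin n) (c : Fin k), c ≠ P i →
        ¬ costMAX v (Function.update P i c) i < costMAX v P i) ∧
    -- UIS: a jump-stable coalition structure exists
    (∃ P : Fin n → Fin k, ∀ (i : Fin n) (c : Fin k), c ≠ P i →
        ¬ costMaxUIS v (Function.update P i c) i < costMaxUIS v P i) := by
  haveI : Nonempty (Fin k) := ⟨⟨0, hk⟩⟩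
  haveI : Nonempty (Fin n → Fin k) := inferInstance
  set RH : (Fin n → Fin k) → (Fin n → Fin k) → Prop := fun P Q =>
    ∃ (i : Fin n) (c : Fin k), c ≠ P i ∧ Q = Function.update P i c ∧
      costMAX v Q i < costMAX v P i with hRH
  set RU : (Fin n → Fin k) → (Fin n → Fin k) → Prop := fun P Q =>
    ∃ (i : Fin n) (c : Fin k), c ≠ P i ∧ Q = Function.update P i c ∧
      costMaxUIS v Q i < costMaxUIS v P i with hRU
  have hHIS : ¬ ∃ f : ℕ → (Fin n → Fin k), ∀ t, RH (f t) (f (t + 1)) := by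
    rintro ⟨f, hf⟩
    apply MaxJumpAux.no_decreasing_seq (MaxJumpAux.phiPair v) f
    intro t
    obtain ⟨i, c, _, hupd, hlt⟩ := hf t
    rw [hupd] at hlt ⊢
    exact MaxJumpAux.phiPair_jump v hlt
  have hUIS : ¬ ∃ f : ℕ → (Fin n → Fin k), ∀ t, RU (f t) (f (t + 1)) := by
    rintro ⟨f, hf⟩
    apply MaxJumpAux.no_decreasing_seq (MaxJumpAux.phiU v) f
    intro t
    obtain ⟨i, c, hc, hupd, hlt⟩ := hf t
    rw [hupd] at hlt ⊢
    exact MaxJumpAux.phiU_jump v hc hlt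
  refine ⟨hHIS, hUIS, ?_, ?_⟩
  · obtain ⟨P, hP⟩ := MaxJumpAux.exists_stable_of_noseq RH hHIS
    exact ⟨P, fun i c hc hlt => hP (Function.update P i c) ⟨i, c, hc, rfl, hlt⟩⟩
  · obtain ⟨P, hP⟩ := MaxJumpAux.exists_stable_of_noseq RU hUIS
    exact ⟨P, fun i c hc hlt => hP (Function.update P i c) ⟨i, c, hc, rfl, hlt⟩⟩
end
end

section
/- For the Avg-Jump game with 12 agents with values (1,1,2,2,2,2,3,3,3,3,4,4) and k = 2 coalitions, the unsorted coalition structure {{1,1,3,3,3,3},{2,2,2,2,4,4}} is jump stable: no agent strictly decreases its Average cost by moving to the other coalition. -/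
open Finset

noncomputable section

/-- The 12 agents with values (1,1,2,2,2,2,3,3,3,3,4,4). -/
def vS8 : Fin 12 → ℝ := ![1, 1, 2, 2, 2, 2, 3, 3, 3, 3, 4, 4]

/-- The coalition structure {{1,1,3,3,3,3},{2,2,2,2,4,4}}. -/
def PS8 : Fin 12 → Fin 2 := ![0, 0, 1, 1, 1, 1, 0, 0, 0, 0, 1, 1]

lemma sum_erase_filter {n : ℕ} (p : Fin n → Prop) [DecidablePred p] (i : Fin n) (f : Fin n → ℝ) :
    ∑ j ∈ (Finset.univ.filter p).erase i, f j
      = ∑ j ∈ Finset.univ, if p j ∧ j ≠ i then f j else 0 := by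
  rw [← Finset.sum_filter]
  congr 1
  ext x
  simp [Finset.mem_erase, and_comm]

lemma card_filter_real {n : ℕ} (p : Fin n → Prop) [DecidablePred p] :
    (((Finset.univ : Finset (Fin n)).filter p).card : ℝ)
      = ∑ j ∈ Finset.univ, if p j then (1:ℝ) else 0 := by
  rw [Finset.card_filter, Nat.cast_sum]
  exact Finset.sum_congr rfl fun j _ => by split <;> simp

/-- in the Avg-Jump game with values (1,1,2,2,2,2,3,3,3,3,4,4) and k = 2
coalitions, the unsorted coalition structure {{1,1,3,3,3,3},{2,2,2,2,4,4}} is jump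
stable: no agent strictly decreases its Average cost by moving to the other coalition. -/
theorem avg_jump_unsorted_equilibrium :
    (¬ IsSortedStruct vS8 PS8) ∧
    (∀ (i : Fin 12) (c : Fin 2), c ≠ PS8 i →
      ¬ costAVG vS8 (Function.update PS8 i c) i < costAVG vS8 PS8 i) := by
  constructor
  · intro h
    have := h 0 6 2 rfl (by rw [show vS8 0 = 1 from rfl, show vS8 2 = 2 from rfl]; norm_num) (by rw [show vS8 2 = 2 from rfl, show vS8 6 = 3 from rfl]; norm_num)
    simp [PS8] at this
  · intro i c hc
    fin_cases i <;> fin_cases c <;>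
      first
      | exact absurd rfl hc
      | (simp only [costAVG, coal, sum_erase_filter, card_filter_real, Fin.sum_univ_succ,
           Fin.sum_univ_zero]
         simp [Function.update, PS8, vS8]
         norm_num)
end
end

section
/- For all reals L < H, consider the Max-cost game with 8 agents, four of value L and four of value H, and k = 2 coalitions. The sorted coalition structure {{L,L,L,L},{H,H,H,H}} has social cost 0, while the unsorted coalition structure {{L,L,H,H},{L,L,H,H}} has social cost 8·(H−L) and is both swap stable and jump stable (in the HIS setting as well as in the UIS setting). Consequently the price of anarchy of Max-Swap and Max-Jump games is unbounded already for k = 2. -/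
open Finset

noncomputable section

def Bv : Fin 8 → Bool := ![false,false,false,false,true,true,true,true]

lemma fold_eq_aux (L H : ℝ) (hLH : L ≤ H) (b : Fin 8 → Bool) (i : Fin 8) (S : Finset (Fin 8)) :
    Finset.fold max 0 (fun j => |(if b i then H else L) - (if b j then H else L)|) S
      = if ∃ j ∈ S, b j ≠ b i then H - L else 0 := by
  induction S using Finset.induction_on with
  | empty => simp
  | @insert x S hx ih =>
    rw [Finset.fold_insert hx, ih]
    have hval : |(if b i then H else L) - (if b x then H else L)|
        = if b x = b i then 0 else H - L := by
      cases hbi : b i <;> cases hbx : b x <;> simp only [hbi, hbx, if_true, if_false]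
      · simp
      · rw [if_neg (by simp), abs_sub_comm]; exact abs_of_nonneg (by linarith)
      · rw [if_neg (by simp)]; exact abs_of_nonneg (by linarith)
      · simp
    rw [hval]
    by_cases h1 : b x = b i <;> by_cases h2 : ∃ j ∈ S, b j ≠ b i <;>
      simp [h1, h2, max_def] <;> first | (split_ifs <;> intros <;> linarith) | (intros; linarith)

/-- for all reals L < H, in the Max-cost game with four agents of value
L, four of value H, and k = 2 coalitions, the sorted structure {{L,L,L,L},{H,H,H,H}}
has social cost 0, while the unsorted structure {{L,L,H,H},{L,L,H,H}} has social cost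
8·(H−L) and is swap stable as well as jump stable in both the HIS and the UIS setting.
Consequently the price of anarchy of Max-Swap and Max-Jump games is unbounded already
for k = 2 (the equilibrium/optimum cost ratio exceeds every bound). -/
theorem max_poa_unbounded (L H : ℝ) (hLH : L < H)
    (v : Fin 8 → ℝ) (hveq : v = ![L, L, L, L, H, H, H, H])
    (Popt Pbad : Fin 8 → Fin 2)
    (hPopt : Popt = ![0, 0, 0, 0, 1, 1, 1, 1])
    (hPbad : Pbad = ![0, 0, 1, 1, 0, 0, 1, 1]) :
    IsSortedStruct v Popt ∧ (¬ IsSortedStruct v Pbad) ∧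
    ((∑ i, costMAX v Popt i) = 0) ∧
    ((∑ i, costMAX v Pbad i) = 8 * (H - L)) ∧
    -- Pbad is swap stable
    (∀ i j : Fin 8, Pbad i ≠ Pbad j →
      ¬ (costMAX v (swapP Pbad i j) i < costMAX v Pbad i ∧
         costMAX v (swapP Pbad i j) j < costMAX v Pbad j)) ∧
    -- Pbad is jump stable in the HIS setting
    (∀ (i : Fin 8) (c : Fin 2), c ≠ Pbad i →
      ¬ costMAX v (Function.update Pbad i c) i < costMAX v Pbad i) ∧
    -- Pbad is jump stable in the UIS setting
    (∀ (i : Fin 8) (c : Fin 2), c ≠ Pbad i →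
      ¬ costMaxUIS v (Function.update Pbad i c) i < costMaxUIS v Pbad i) ∧
    -- the equilibrium cost exceeds every multiple of the optimum cost
    (∀ M : ℝ, M * (∑ i, costMAX v Popt i) < ∑ i, costMAX v Pbad i) := by
  subst hveq hPopt hPbad
  have hv : (![L,L,L,L,H,H,H,H] : Fin 8 → ℝ) = fun m => if Bv m then H else L := by
    funext m; fin_cases m <;> rfl
  have hcost : ∀ (P : Fin 8 → Fin 2) (i : Fin 8),
      costMAX ![L,L,L,L,H,H,H,H] P i
        = if ∃ j ∈ (coal P (P i)).erase i, Bv j ≠ Bv i then H - L else 0 := by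
    intro P i
    rw [costMAX, hv]
    exact fold_eq_aux L H hLH.le Bv i _
  have hyes : ∀ i : Fin 8,
      ∃ j ∈ (coal (![0,0,1,1,0,0,1,1] : Fin 8 → Fin 2)
        ((![0,0,1,1,0,0,1,1] : Fin 8 → Fin 2) i)).erase i, Bv j ≠ Bv i := by decide
  have hbadcost : ∀ i : Fin 8, costMAX ![L,L,L,L,H,H,H,H] (![0,0,1,1,0,0,1,1] : Fin 8 → Fin 2) i
      = H - L := fun i => by rw [hcost, if_pos (hyes i)]
  have hno : ∀ i : Fin 8,
      ¬ ∃ j ∈ (coal (![0,0,0,0,1,1,1,1] : Fin 8 → Fin 2)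
        ((![0,0,0,0,1,1,1,1] : Fin 8 → Fin 2) i)).erase i, Bv j ≠ Bv i := by decide
  have hoptcost : ∀ i : Fin 8, costMAX ![L,L,L,L,H,H,H,H] (![0,0,0,0,1,1,1,1] : Fin 8 → Fin 2) i
      = 0 := fun i => by rw [hcost, if_neg (hno i)]
  have hsum0 : (∑ i, costMAX ![L,L,L,L,H,H,H,H] (![0,0,0,0,1,1,1,1] : Fin 8 → Fin 2) i) = 0 := by
    simp [hoptcost]
  have hsum8 : (∑ i, costMAX ![L,L,L,L,H,H,H,H] (![0,0,1,1,0,0,1,1] : Fin 8 → Fin 2) i)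
      = 8 * (H - L) := by
    simp only [hbadcost]; rw [Fin.sum_univ_eight]; ring
  have hle : ∀ a c : Fin 8, (![L,L,L,L,H,H,H,H] : Fin 8 → ℝ) a ≤ (![L,L,L,L,H,H,H,H] : Fin 8 → ℝ) c
      ↔ (Bv a = true → Bv c = true) := by
    intro a c
    rw [hv]
    cases ha : Bv a <;> cases hc : Bv c <;> simp [ha, hc, hLH.le, not_le.mpr hLH]
  refine ⟨?_, ?_, hsum0, hsum8, ?_, ?_, ?_, ?_⟩
  · intro i j l hij h1 h2
    have key : ∀ i j l : Fin 8, (![0,0,0,0,1,1,1,1] : Fin 8 → Fin 2) i = (![0,0,0,0,1,1,1,1] : Fin 8 → Fin 2) j →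
        (Bv i = true → Bv l = true) → (Bv l = true → Bv j = true) →
        (![0,0,0,0,1,1,1,1] : Fin 8 → Fin 2) l = (![0,0,0,0,1,1,1,1] : Fin 8 → Fin 2) i := by decide
    exact key i j l hij ((hle i l).mp h1) ((hle l j).mp h2)
  · intro hs
    have h := hs 0 4 2 rfl (by rw [hle]; decide) (by rw [hle]; decide)
    exact absurd h (by decide)
  · have hyes2 : ∀ i j : Fin 8, (![0,0,1,1,0,0,1,1] : Fin 8 → Fin 2) i ≠ (![0,0,1,1,0,0,1,1] : Fin 8 → Fin 2) j →
        ∃ l ∈ (coal (swapP (![0,0,1,1,0,0,1,1] : Fin 8 → Fin 2) i j)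
          ((swapP (![0,0,1,1,0,0,1,1] : Fin 8 → Fin 2) i j) i)).erase i, Bv l ≠ Bv i := by decide
    intro i j hne h
    rw [hcost, if_pos (hyes2 i j hne), hbadcost] at h
    exact lt_irrefl _ h.1
  · have hyes3 : ∀ (i : Fin 8) (c : Fin 2), c ≠ (![0,0,1,1,0,0,1,1] : Fin 8 → Fin 2) i →
        ∃ l ∈ (coal (Function.update (![0,0,1,1,0,0,1,1] : Fin 8 → Fin 2) i c)
          ((Function.update (![0,0,1,1,0,0,1,1] : Fin 8 → Fin 2) i c) i)).erase i, Bv l ≠ Bv i := by decide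
    intro i c hc h
    rw [hcost, if_pos (hyes3 i c hc), hbadcost] at h
    exact lt_irrefl _ h
  · have hyes3 : ∀ (i : Fin 8) (c : Fin 2), c ≠ (![0,0,1,1,0,0,1,1] : Fin 8 → Fin 2) i →
        ∃ l ∈ (coal (Function.update (![0,0,1,1,0,0,1,1] : Fin 8 → Fin 2) i c)
          ((Function.update (![0,0,1,1,0,0,1,1] : Fin 8 → Fin 2) i c) i)).erase i, Bv l ≠ Bv i := by decide
    have hcard1 : ∀ i : Fin 8, ¬ (coal (![0,0,1,1,0,0,1,1] : Fin 8 → Fin 2)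
        ((![0,0,1,1,0,0,1,1] : Fin 8 → Fin 2) i)).card ≤ 1 := by decide
    have hcard2 : ∀ (i : Fin 8) (c : Fin 2), c ≠ (![0,0,1,1,0,0,1,1] : Fin 8 → Fin 2) i →
        ¬ (coal (Function.update (![0,0,1,1,0,0,1,1] : Fin 8 → Fin 2) i c)
          ((Function.update (![0,0,1,1,0,0,1,1] : Fin 8 → Fin 2) i c) i)).card ≤ 1 := by decide
    intro i c hc h
    rw [costMaxUIS, costMaxUIS, if_neg (hcard2 i c hc), if_neg (hcard1 i),
      hcost, if_pos (hyes3 i c hc), hbadcost] at h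
    exact lt_irrefl _ h
  · intro M
    rw [hsum0, hsum8, mul_zero]
    nlinarith
end
end

section
/- Fix λ = 1 and ε with 0 < ε ≤ 1/2, and consider the Cutoff_1 game with 5 agents with values (0, 1−ε, 1, 1+ε, 2) and k = 2 coalitions. The coalition structure {{0, 1−ε, 1},{1+ε, 2}} has social cost 0, while the coalition structure {{0, 1, 2},{1−ε, 1+ε}} has social cost 1 and is both jump stable and swap stable. Consequently the price of anarchy of Cutoff_λ-Swap and Cutoff_λ-Jump games with k = 2 coalitions is unbounded. -/
open Finset

noncomputable section

lemma costCUT_nonneg {n k : ℕ} (lam : ℝ) (v : Fin n → ℝ) (P : Fin n → Fin k) (i : Fin n) :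
    0 ≤ costCUT lam v P i := by
  apply div_nonneg (Nat.cast_nonneg _)
  have hi : i ∈ coal P (P i) := by simp [coal]
  have h1 : 1 ≤ (coal P (P i)).card := Finset.card_pos.mpr ⟨i, hi⟩
  have : (1:ℝ) ≤ ((coal P (P i)).card : ℝ) := by exact_mod_cast h1
  linarith

/-- for λ = 1 and 0 < ε ≤ 1/2, in the Cutoff_1 game with 5 agents with
values (0, 1−ε, 1, 1+ε, 2) and k = 2 coalitions, the structure {{0,1−ε,1},{1+ε,2}}
has social cost 0, while the structure {{0,1,2},{1−ε,1+ε}} has social cost 1 and is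
both jump stable and swap stable. Consequently the price of anarchy of Cutoff_λ-Swap
and Cutoff_λ-Jump games with k = 2 coalitions is unbounded (the equilibrium/optimum
cost ratio exceeds every bound). -/
theorem cutoff_poa_unbounded (eps : ℝ) (heps0 : 0 < eps) (heps : eps ≤ 1 / 2)
    (v : Fin 5 → ℝ) (hveq : v = ![0, 1 - eps, 1, 1 + eps, 2])
    (Popt Pbad : Fin 5 → Fin 2)
    (hPopt : Popt = ![0, 0, 0, 1, 1])
    (hPbad : Pbad = ![0, 1, 0, 1, 0]) :
    ((∑ i, costCUT 1 v Popt i) = 0) ∧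
    ((∑ i, costCUT 1 v Pbad i) = 1) ∧
    -- Pbad is jump stable
    (∀ (i : Fin 5) (c : Fin 2), c ≠ Pbad i →
      ¬ costCUT 1 v (Function.update Pbad i c) i < costCUT 1 v Pbad i) ∧
    -- Pbad is swap stable
    (∀ i j : Fin 5, Pbad i ≠ Pbad j →
      ¬ (costCUT 1 v (swapP Pbad i j) i < costCUT 1 v Pbad i ∧
         costCUT 1 v (swapP Pbad i j) j < costCUT 1 v Pbad j)) ∧
    -- the equilibrium cost exceeds every multiple of the optimum cost
    (∀ M : ℝ, M * (∑ i, costCUT 1 v Popt i) < ∑ i, costCUT 1 v Pbad i) := by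
  subst hveq hPopt hPbad
  -- optimal structure costs
  have ho0 : costCUT 1 ![0, 1-eps, 1, 1+eps, 2] (![0,0,0,1,1] : Fin 5 → Fin 2) 0 = 0 := by
    rw [costCUT,
      show coal (![0,0,0,1,1] : Fin 5 → Fin 2) ((![0,0,0,1,1] : Fin 5 → Fin 2) 0) = ({0,1,2} : Finset (Fin 5)) from by decide,
      show ({0,1,2}:Finset (Fin 5)).erase 0 = {1,2} from by decide,
      Finset.filter_insert, Finset.filter_singleton]
    simp only [Matrix.cons_val_zero, Matrix.cons_val_one, Matrix.head_cons, Matrix.cons_val_two,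
      Matrix.tail_cons]
    rw [if_neg (by rw [not_lt, abs_le]; constructor <;> linarith),
        if_neg (by rw [not_lt, abs_le]; constructor <;> linarith)]
    norm_num
  have ho1 : costCUT 1 ![0, 1-eps, 1, 1+eps, 2] (![0,0,0,1,1] : Fin 5 → Fin 2) 1 = 0 := by
    rw [costCUT,
      show coal (![0,0,0,1,1] : Fin 5 → Fin 2) ((![0,0,0,1,1] : Fin 5 → Fin 2) 1) = ({0,1,2} : Finset (Fin 5)) from by decide,
      show ({0,1,2}:Finset (Fin 5)).erase 1 = {0,2} from by decide,
      Finset.filter_insert, Finset.filter_singleton]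
    simp only [Matrix.cons_val_zero, Matrix.cons_val_one, Matrix.head_cons, Matrix.cons_val_two,
      Matrix.tail_cons]
    rw [if_neg (by rw [not_lt, abs_le]; constructor <;> linarith),
        if_neg (by rw [not_lt, abs_le]; constructor <;> linarith)]
    norm_num
  have ho2 : costCUT 1 ![0, 1-eps, 1, 1+eps, 2] (![0,0,0,1,1] : Fin 5 → Fin 2) 2 = 0 := by
    rw [costCUT,
      show coal (![0,0,0,1,1] : Fin 5 → Fin 2) ((![0,0,0,1,1] : Fin 5 → Fin 2) 2) = ({0,1,2} : Finset (Fin 5)) from by decide,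
      show ({0,1,2}:Finset (Fin 5)).erase 2 = {0,1} from by decide,
      Finset.filter_insert, Finset.filter_singleton]
    simp only [Matrix.cons_val_zero, Matrix.cons_val_one, Matrix.head_cons, Matrix.cons_val_two,
      Matrix.tail_cons]
    rw [if_neg (by rw [not_lt, abs_le]; constructor <;> linarith),
        if_neg (by rw [not_lt, abs_le]; constructor <;> linarith)]
    norm_num
  have ho3 : costCUT 1 ![0, 1-eps, 1, 1+eps, 2] (![0,0,0,1,1] : Fin 5 → Fin 2) 3 = 0 := by
    rw [costCUT,
      show coal (![0,0,0,1,1] : Fin 5 → Fin 2) ((![0,0,0,1,1] : Fin 5 → Fin 2) 3) = ({3,4} : Finset (Fin 5)) from by decide,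
      show ({3,4}:Finset (Fin 5)).erase 3 = {4} from by decide,
      Finset.filter_singleton]
    simp only [Matrix.cons_val_three, Matrix.cons_val_four, Matrix.head_cons, Matrix.tail_cons,
      Matrix.cons_val_zero]
    rw [if_neg (by rw [not_lt, abs_le]; constructor <;> linarith)]
    norm_num
  have ho4 : costCUT 1 ![0, 1-eps, 1, 1+eps, 2] (![0,0,0,1,1] : Fin 5 → Fin 2) 4 = 0 := by
    rw [costCUT,
      show coal (![0,0,0,1,1] : Fin 5 → Fin 2) ((![0,0,0,1,1] : Fin 5 → Fin 2) 4) = ({3,4} : Finset (Fin 5)) from by decide,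
      show ({3,4}:Finset (Fin 5)).erase 4 = {3} from by decide,
      Finset.filter_singleton]
    simp only [Matrix.cons_val_three, Matrix.cons_val_four, Matrix.head_cons, Matrix.tail_cons,
      Matrix.cons_val_zero]
    rw [if_neg (by rw [not_lt, abs_le]; constructor <;> linarith)]
    norm_num
  -- bad structure costs
  have hb0 : costCUT 1 ![0, 1-eps, 1, 1+eps, 2] (![0,1,0,1,0] : Fin 5 → Fin 2) 0 = 1/2 := by
    rw [costCUT,
      show coal (![0,1,0,1,0] : Fin 5 → Fin 2) ((![0,1,0,1,0] : Fin 5 → Fin 2) 0) = ({0,2,4} : Finset (Fin 5)) from by decide,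
      show ({0,2,4}:Finset (Fin 5)).erase 0 = {2,4} from by decide,
      Finset.filter_insert, Finset.filter_singleton]
    simp only [Matrix.cons_val_zero, Matrix.cons_val_two, Matrix.cons_val_four, Matrix.head_cons,
      Matrix.tail_cons]
    rw [if_neg (by rw [not_lt, abs_le]; constructor <;> linarith),
        if_pos (by rw [lt_abs]; right; linarith)]
    rw [show #({0,2,4}:Finset (Fin 5)) = 3 from by decide]
    norm_num
  have hb1 : costCUT 1 ![0, 1-eps, 1, 1+eps, 2] (![0,1,0,1,0] : Fin 5 → Fin 2) 1 = 0 := by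
    rw [costCUT,
      show coal (![0,1,0,1,0] : Fin 5 → Fin 2) ((![0,1,0,1,0] : Fin 5 → Fin 2) 1) = ({1,3} : Finset (Fin 5)) from by decide,
      show ({1,3}:Finset (Fin 5)).erase 1 = {3} from by decide,
      Finset.filter_singleton]
    simp only [Matrix.cons_val_one, Matrix.head_cons, Matrix.cons_val_three, Matrix.tail_cons,
      Matrix.cons_val_zero]
    rw [if_neg (by rw [not_lt, abs_le]; constructor <;> linarith)]
    norm_num
  have hb2 : costCUT 1 ![0, 1-eps, 1, 1+eps, 2] (![0,1,0,1,0] : Fin 5 → Fin 2) 2 = 0 := by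
    rw [costCUT,
      show coal (![0,1,0,1,0] : Fin 5 → Fin 2) ((![0,1,0,1,0] : Fin 5 → Fin 2) 2) = ({0,2,4} : Finset (Fin 5)) from by decide,
      show ({0,2,4}:Finset (Fin 5)).erase 2 = {0,4} from by decide,
      Finset.filter_insert, Finset.filter_singleton]
    simp only [Matrix.cons_val_zero, Matrix.cons_val_two, Matrix.cons_val_four, Matrix.head_cons,
      Matrix.tail_cons]
    rw [if_neg (by rw [not_lt, abs_le]; constructor <;> linarith),
        if_neg (by rw [not_lt, abs_le]; constructor <;> linarith)]
    norm_num
  have hb3 : costCUT 1 ![0, 1-eps, 1, 1+eps, 2] (![0,1,0,1,0] : Fin 5 → Fin 2) 3 = 0 := by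
    rw [costCUT,
      show coal (![0,1,0,1,0] : Fin 5 → Fin 2) ((![0,1,0,1,0] : Fin 5 → Fin 2) 3) = ({1,3} : Finset (Fin 5)) from by decide,
      show ({1,3}:Finset (Fin 5)).erase 3 = {1} from by decide,
      Finset.filter_singleton]
    simp only [Matrix.cons_val_one, Matrix.head_cons, Matrix.cons_val_three, Matrix.tail_cons,
      Matrix.cons_val_zero]
    rw [if_neg (by rw [not_lt, abs_le]; constructor <;> linarith)]
    norm_num
  have hb4 : costCUT 1 ![0, 1-eps, 1, 1+eps, 2] (![0,1,0,1,0] : Fin 5 → Fin 2) 4 = 1/2 := by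
    rw [costCUT,
      show coal (![0,1,0,1,0] : Fin 5 → Fin 2) ((![0,1,0,1,0] : Fin 5 → Fin 2) 4) = ({0,2,4} : Finset (Fin 5)) from by decide,
      show ({0,2,4}:Finset (Fin 5)).erase 4 = {0,2} from by decide,
      Finset.filter_insert, Finset.filter_singleton]
    simp only [Matrix.cons_val_zero, Matrix.cons_val_two, Matrix.cons_val_four, Matrix.head_cons,
      Matrix.tail_cons]
    rw [if_pos (by rw [lt_abs]; left; linarith),
        if_neg (by rw [not_lt, abs_le]; constructor <;> linarith)]
    rw [show #({0,2,4}:Finset (Fin 5)) = 3 from by decide]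
    norm_num
  -- jump costs for agents 0 and 4
  have hj0 : costCUT 1 ![0, 1-eps, 1, 1+eps, 2]
      (Function.update (![0,1,0,1,0] : Fin 5 → Fin 2) 0 1) 0 = 1/2 := by
    rw [costCUT,
      show coal (Function.update (![0,1,0,1,0] : Fin 5 → Fin 2) 0 1)
        ((Function.update (![0,1,0,1,0] : Fin 5 → Fin 2) 0 1) 0) = ({0,1,3} : Finset (Fin 5)) from by decide,
      show ({0,1,3}:Finset (Fin 5)).erase 0 = {1,3} from by decide,
      Finset.filter_insert, Finset.filter_singleton]
    simp only [Matrix.cons_val_zero, Matrix.cons_val_one, Matrix.head_cons, Matrix.cons_val_three,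
      Matrix.tail_cons]
    rw [if_neg (by rw [not_lt, abs_le]; constructor <;> linarith),
        if_pos (by rw [lt_abs]; right; linarith)]
    rw [show #({0,1,3}:Finset (Fin 5)) = 3 from by decide]
    norm_num
  have hj4 : costCUT 1 ![0, 1-eps, 1, 1+eps, 2]
      (Function.update (![0,1,0,1,0] : Fin 5 → Fin 2) 4 1) 4 = 1/2 := by
    rw [costCUT,
      show coal (Function.update (![0,1,0,1,0] : Fin 5 → Fin 2) 4 1)
        ((Function.update (![0,1,0,1,0] : Fin 5 → Fin 2) 4 1) 4) = ({1,3,4} : Finset (Fin 5)) from by decide,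
      show ({1,3,4}:Finset (Fin 5)).erase 4 = {1,3} from by decide,
      Finset.filter_insert, Finset.filter_singleton]
    simp only [Matrix.cons_val_one, Matrix.head_cons, Matrix.cons_val_three, Matrix.cons_val_four,
      Matrix.tail_cons, Matrix.cons_val_zero]
    rw [if_pos (by rw [lt_abs]; left; linarith),
        if_neg (by rw [not_lt, abs_le]; constructor <;> linarith)]
    rw [show #({1,3,4}:Finset (Fin 5)) = 3 from by decide]
    norm_num
  have hsum0 : (∑ i, costCUT 1 ![0, 1-eps, 1, 1+eps, 2] (![0,0,0,1,1] : Fin 5 → Fin 2) i) = 0 := by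
    rw [Fin.sum_univ_five, ho0, ho1, ho2, ho3, ho4]; norm_num
  have hsum1 : (∑ i, costCUT 1 ![0, 1-eps, 1, 1+eps, 2] (![0,1,0,1,0] : Fin 5 → Fin 2) i) = 1 := by
    rw [Fin.sum_univ_five, hb0, hb1, hb2, hb3, hb4]; norm_num
  refine ⟨hsum0, hsum1, ?_, ?_, ?_⟩
  · -- jump stability
    intro i c hne
    fin_cases i <;> fin_cases c <;>
      first
      | exact absurd rfl hne
      | exact not_lt.mpr (le_of_eq (hb0.trans hj0.symm))
      | exact not_lt.mpr (le_of_eq (hb4.trans hj4.symm))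
      | exact not_lt.mpr (hb1.trans_le (costCUT_nonneg _ _ _ _))
      | exact not_lt.mpr (hb2.trans_le (costCUT_nonneg _ _ _ _))
      | exact not_lt.mpr (hb3.trans_le (costCUT_nonneg _ _ _ _))
  · -- swap stability
    intro i j hne
    rintro ⟨h1, h2⟩
    fin_cases i <;> fin_cases j <;>
      first
      | exact absurd rfl hne
      | exact absurd h1 (not_lt.mpr (hb1.trans_le (costCUT_nonneg _ _ _ _)))
      | exact absurd h1 (not_lt.mpr (hb2.trans_le (costCUT_nonneg _ _ _ _)))
      | exact absurd h1 (not_lt.mpr (hb3.trans_le (costCUT_nonneg _ _ _ _)))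
      | exact absurd h2 (not_lt.mpr (hb1.trans_le (costCUT_nonneg _ _ _ _)))
      | exact absurd h2 (not_lt.mpr (hb3.trans_le (costCUT_nonneg _ _ _ _)))
  · intro M
    rw [hsum0, hsum1]
    norm_num
end
end

section
/- Consider an Avg-Jump game in the HIS setting with k = 2 coalitions. If the agents take at most two distinct values (equivalently, if some coalition structure has social cost 0), then every jump-stable coalition structure has social cost 0. -/
open Finset

noncomputable section

lemma sum_abs_filter {n : ℕ} (v : Fin n → ℝ) (a b : ℝ) (htwo : ∀ i : Fin n, v i = a ∨ v i = b)
    (i : Fin n) (T : Finset (Fin n)) :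
    ∑ t ∈ T, |v i - v t| = ((T.filter (fun t => v t ≠ v i)).card : ℝ) * |a - b| := by
  classical
  rw [← Finset.sum_filter_add_sum_filter_not T (fun t => v t ≠ v i)]
  have h2 : ∑ t ∈ T.filter (fun t => ¬ v t ≠ v i), |v i - v t| = 0 := by
    apply Finset.sum_eq_zero
    intro t ht
    simp only [Finset.mem_filter, not_not] at ht
    rw [ht.2]; simp
  have h1 : ∑ t ∈ T.filter (fun t => v t ≠ v i), |v i - v t|
      = ((T.filter fun t => v t ≠ v i).card : ℝ) * |a - b| := by
    rw [Finset.sum_congr rfl (g := fun _ => |a - b|) ?_]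
    · rw [Finset.sum_const, nsmul_eq_mul]
    · intro t ht
      simp only [Finset.mem_filter] at ht
      rcases htwo i with hi | hi <;> rcases htwo t with htv | htv
      · exact absurd (htv.trans hi.symm) ht.2
      · rw [hi, htv]
      · rw [hi, htv, abs_sub_comm]
      · exact absurd (htv.trans hi.symm) ht.2
  rw [h1, h2, add_zero]

lemma filter_erase_eq {n : ℕ} (v : Fin n → ℝ) (i : Fin n) (T : Finset (Fin n)) :
    (T.erase i).filter (fun t => v t ≠ v i) = T.filter (fun t => v t ≠ v i) := by
  ext t
  simp only [Finset.mem_filter, Finset.mem_erase]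
  constructor
  · rintro ⟨⟨_, ht⟩, h⟩; exact ⟨ht, h⟩
  · rintro ⟨ht, h⟩; exact ⟨⟨fun he => h (by rw [he]), ht⟩, h⟩

lemma coal_update {n : ℕ} (P : Fin n → Fin 2) (i : Fin n) (c : Fin 2) (hc : c ≠ P i) :
    coal (Function.update P i c) c = insert i (coal P c) := by
  ext t
  simp only [coal, Finset.mem_filter, Finset.mem_univ, true_and, Finset.mem_insert]
  rcases eq_or_ne t i with rfl | ht
  · simp [Function.update_self]
  · simp only [Function.update_of_ne ht]
    constructor
    · exact Or.inr
    · rintro (rfl | h)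
      · exact absurd rfl ht
      · exact h

lemma costAVG_update {n : ℕ} (v : Fin n → ℝ) (P : Fin n → Fin 2) (i : Fin n) (c : Fin 2)
    (hc : c ≠ P i) :
    costAVG v (Function.update P i c) i
      = (∑ t ∈ coal P c, |v i - v t|) / ((coal P c).card : ℝ) := by
  have hi : i ∉ coal P c := by simp [coal, hc.symm]
  unfold costAVG
  rw [Function.update_self, coal_update P i c hc, Finset.erase_insert hi,
    Finset.card_insert_of_notMem hi]
  push_cast
  ring_nf

lemma key_aux {n : ℕ} (v : Fin n → ℝ) (a b : ℝ) (htwo : ∀ i : Fin n, v i = a ∨ v i = b)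
    (P : Fin n → Fin 2)
    (hstable : ∀ (i : Fin n) (c : Fin 2), c ≠ P i →
      ¬ costAVG v (Function.update P i c) i < costAVG v P i)
    (i j : Fin n) (hvi : v i = a) (hvj : v j = b) (hab : a ≠ b) (hPij : P i = P j) :
    False := by
  classical
  have hcc : ∀ e : Fin 2, e + 1 ≠ e := by decide
  have hij : i ≠ j := by intro h; apply hab; rw [← hvi, ← hvj, h]
  set C := coal P (P i) with hC
  set C' := coal P (P i + 1) with hC'
  have hiC : i ∈ C := by simp [hC, coal]
  have hjC : j ∈ C := by simp [hC, coal, hPij.symm]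
  set d := |a - b| with hd
  have hdpos : 0 < d := abs_pos.mpr (sub_ne_zero.mpr hab)
  -- stability inequality for any member t of C
  have hineq : ∀ t : Fin n, P t = P i →
      ((C.filter (fun s => v s ≠ v t)).card : ℝ) * d / ((C.card : ℝ) - 1)
        ≤ ((C'.filter (fun s => v s ≠ v t)).card : ℝ) * d / (C'.card : ℝ) := by
    intro t ht
    have h1 := hstable t (P i + 1) (by rw [ht]; exact hcc _)
    rw [not_lt] at h1
    have e1 : costAVG v P t
        = ((C.filter (fun s => v s ≠ v t)).card : ℝ) * d / ((C.card : ℝ) - 1) := by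
      unfold costAVG
      rw [ht, ← hC, sum_abs_filter v a b htwo t _, filter_erase_eq]
    have e2 : costAVG v (Function.update P t (P i + 1)) t
        = ((C'.filter (fun s => v s ≠ v t)).card : ℝ) * d / (C'.card : ℝ) := by
      rw [costAVG_update v P t (P i + 1) (by rw [ht]; exact hcc _), ← hC',
        sum_abs_filter v a b htwo t _]
    rw [e1, e2] at h1
    exact h1
  have Ii := hineq i rfl
  have Ij := hineq j hPij.symm
  -- counts
  set y := (C.filter (fun s => v s ≠ v i)).card with hy
  set x := (C.filter (fun s => v s ≠ v j)).card with hx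
  set y' := (C'.filter (fun s => v s ≠ v i)).card with hy'
  set x' := (C'.filter (fun s => v s ≠ v j)).card with hx'
  have hy1 : 1 ≤ y := by
    apply Finset.card_pos.mpr
    exact ⟨j, Finset.mem_filter.mpr ⟨hjC, by rw [hvi, hvj]; exact fun h => hab h.symm⟩⟩
  have hx1 : 1 ≤ x := by
    apply Finset.card_pos.mpr
    exact ⟨i, Finset.mem_filter.mpr ⟨hiC, by rw [hvi, hvj]; exact hab⟩⟩
  have hpart : ∀ T : Finset (Fin n),
      (T.filter (fun s => v s ≠ v j)).card + (T.filter (fun s => v s ≠ v i)).card = T.card := by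
    intro T
    have : T.filter (fun s => v s ≠ v i) = T.filter (fun s => ¬ v s ≠ v j) := by
      apply Finset.filter_congr
      intro s _
      simp only [not_not]
      have hba : b ≠ a := fun h => hab h.symm
      rcases htwo s with hs | hs <;> rw [hs, hvi, hvj]
      · simp [hab]
      · simp [hba]
    rw [this]
    exact Finset.card_filter_add_card_filter_not _
  have hmC : x + y = C.card := hpart C
  have hmC' : x' + y' = C'.card := hpart C'
  rcases Nat.eq_zero_or_pos C'.card with h0 | hpos
  · have hy'0 : y' = 0 := by omega
    rw [hy'0, h0] at Ii
    have hlhs : 0 < (y : ℝ) * d / ((C.card : ℝ) - 1) := by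
      apply div_pos
      · exact mul_pos (by exact_mod_cast hy1) hdpos
      · have : 2 ≤ C.card := by omega
        have : (2 : ℝ) ≤ (C.card : ℝ) := by exact_mod_cast this
        linarith
    simp only [Nat.cast_zero, zero_mul, zero_div] at Ii
    linarith
  · have hsum := add_le_add Ii Ij
    rw [← add_div, ← add_div, ← add_mul, ← add_mul] at hsum
    have hrhs : ((y' : ℝ) + (x' : ℝ)) * d / (C'.card : ℝ) = d := by
      have : (y' : ℝ) + (x' : ℝ) = (C'.card : ℝ) := by
        rw [← hmC']; push_cast; ring
      rw [this]
      field_simp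
    rw [hrhs] at hsum
    have hlhs : ((y : ℝ) + (x : ℝ)) = (C.card : ℝ) := by
      rw [← hmC]; push_cast; ring
    rw [hlhs] at hsum
    have h2C : 2 ≤ C.card := by omega
    have h2Cr : (2 : ℝ) ≤ (C.card : ℝ) := by exact_mod_cast h2C
    rw [div_le_iff₀ (by linarith)] at hsum
    nlinarith

/-- in an Avg-Jump game in the HIS setting with k = 2 coalitions, if the
agents take at most two distinct values (so that some coalition structure has social
cost 0), then every jump-stable coalition structure has social cost 0. -/
theorem avg_jump_his_two_values_equilibria_optimal
    {n : ℕ} (v : Fin n → ℝ) (hv : Monotone v)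
    (a b : ℝ) (htwo : ∀ i : Fin n, v i = a ∨ v i = b)
    (P : Fin n → Fin 2)
    (hstable : ∀ (i : Fin n) (c : Fin 2), c ≠ P i →
      ¬ costAVG v (Function.update P i c) i < costAVG v P i) :
    (∑ i, costAVG v P i) = 0 := by
  classical
  have hsame : ∀ i t : Fin n, P t = P i → v t = v i := by
    intro i t hPt
    by_contra hne
    rcases htwo i with hi | hi <;> rcases htwo t with ht | ht
    · exact hne (ht.trans hi.symm)
    · exact key_aux v b a (fun s => (htwo s).symm) P hstable t i ht hi
        (fun h => hne (ht.trans (h.trans hi.symm))) hPt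
    · exact key_aux v a b htwo P hstable t i ht hi
        (fun h => hne (ht.trans (h.trans hi.symm))) hPt
    · exact hne (ht.trans hi.symm)
  apply Finset.sum_eq_zero
  intro i _
  unfold costAVG
  have : ∑ j ∈ (coal P (P i)).erase i, |v i - v j| = 0 := by
    apply Finset.sum_eq_zero
    intro t ht
    have htc : P t = P i := by
      have := Finset.mem_of_mem_erase ht
      simpa [coal] using this
    rw [hsame i t htc]
    simp
  rw [this, zero_div]
end
end

section
/- Let n agents have strictly increasing real values v_1 < v_2 < … < v_n and fix m with 2 ≤ m ≤ n−2. Call an agent i with 1 < i < n isolated in a two-coalition structure {C_1, C_2} if both agents i−1 and i+1 lie in the coalition not containing i. Then every coalition structure {C_1, C_2} with |C_1| = m that minimizes the Average social cost among all partitions of the agents into two coalitions of sizes m and n−m has no isolated agent. -/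
open Finset

noncomputable section

def Dsum {n : ℕ} (v : Fin n → ℝ) (s : Finset (Fin n)) : ℝ :=
  ∑ i ∈ s, ∑ j ∈ s.erase i, |v i - v j|

lemma Dsum_insert {n : ℕ} (v : Fin n → ℝ) {s : Finset (Fin n)} {y : Fin n} (hy : y ∉ s) :
    Dsum v (insert y s) = Dsum v s + 2 * ∑ j ∈ s, |v y - v j| := by
  unfold Dsum
  rw [Finset.sum_insert hy, Finset.erase_insert hy]
  have h : ∀ i ∈ s, ∑ j ∈ (insert y s).erase i, |v i - v j|
      = |v i - v y| + ∑ j ∈ s.erase i, |v i - v j| := by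
    intro i hi
    have hiy : y ≠ i := fun h => hy (h ▸ hi)
    rw [Finset.erase_insert_of_ne hiy,
      Finset.sum_insert (fun h => hy (Finset.mem_of_mem_erase h))]
  rw [Finset.sum_congr rfl h, Finset.sum_add_distrib]
  have h2 : ∀ i ∈ s, |v i - v y| = |v y - v i| := fun i _ => abs_sub_comm _ _
  rw [Finset.sum_congr rfl h2]
  ring

lemma Dsum_erase {n : ℕ} (v : Fin n → ℝ) {s : Finset (Fin n)} {x : Fin n} (hx : x ∈ s) :
    Dsum v s = Dsum v (s.erase x) + 2 * ∑ j ∈ s.erase x, |v x - v j| := by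
  conv_lhs => rw [← Finset.insert_erase hx]
  rw [Dsum_insert v (Finset.notMem_erase x s)]

lemma sum_costAVG_eq {n : ℕ} (v : Fin n → ℝ) (P : Fin n → Fin 2) :
    ∑ i, costAVG v P i = ∑ c : Fin 2, Dsum v (coal P c) / (((coal P c).card : ℝ) - 1) := by
  rw [← Finset.sum_fiberwise Finset.univ P (costAVG v P)]
  refine Finset.sum_congr rfl fun c _ => ?_
  rw [Dsum, Finset.sum_div]
  refine Finset.sum_congr rfl fun i hi => ?_
  have hic : P i = c := by simpa [coal] using hi
  rw [costAVG, hic]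

lemma coal_swap_left {n : ℕ} (P : Fin n → Fin 2) {x y : Fin n} (hxy : P x ≠ P y) :
    coal (swapP P x y) (P x) = insert y ((coal P (P x)).erase x) := by
  have hne : x ≠ y := fun h => hxy (h ▸ rfl)
  ext j
  simp only [coal, swapP, Finset.mem_insert, Finset.mem_erase, Finset.mem_filter,
    Finset.mem_univ, true_and, Function.update_apply]
  by_cases hjy : j = y
  · simp [hjy, hne.symm]
  · by_cases hjx : j = x
    · simp [hjx, hjy, hne, Ne.symm hxy, hxy.symm]
    · simp [hjx, hjy]

lemma coal_swap_right {n : ℕ} (P : Fin n → Fin 2) {x y : Fin n} (hxy : P x ≠ P y) :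
    coal (swapP P x y) (P y) = insert x ((coal P (P y)).erase y) := by
  have hne : x ≠ y := fun h => hxy (h ▸ rfl)
  ext j
  simp only [coal, swapP, Finset.mem_insert, Finset.mem_erase, Finset.mem_filter,
    Finset.mem_univ, true_and, Function.update_apply]
  by_cases hjy : j = y
  · simp [hjy, hne.symm, hxy]
  · by_cases hjx : j = x
    · simp [hjx, hjy, hne]
    · simp [hjx, hjy]

/-- for n agents with strictly increasing values and 2 ≤ m ≤ n−2, every
two-coalition structure with coalition sizes m and n−m that minimizes the Average
social cost among all such structures has no isolated agent: there is no agent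
1 < i < n (0-indexed: 0 < i < n−1) such that both its neighbours i−1 and i+1 lie in
the other coalition. -/
theorem avg_optimum_has_no_isolated_agent
    {n : ℕ} (v : Fin n → ℝ) (hv : StrictMono v)
    (m : ℕ) (hm2 : 2 ≤ m) (hmn : m ≤ n - 2)
    (P : Fin n → Fin 2) (hcard : (coal P 0).card = m)
    (hopt : ∀ Q : Fin n → Fin 2, (coal Q 0).card = m →
      (∑ i, costAVG v P i) ≤ ∑ i, costAVG v Q i) :
    ∀ (i : Fin n) (h1 : 0 < (i : ℕ)) (h2 : (i : ℕ) < n - 1),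
      P (⟨(i : ℕ) - 1, by omega⟩ : Fin n) = P i ∨
      P (⟨(i : ℕ) + 1, by omega⟩ : Fin n) = P i := by
  intro i h1 h2
  by_contra hcon
  push_neg at hcon
  obtain ⟨hm1, hp1⟩ := hcon
  set im : Fin n := ⟨(i : ℕ) - 1, by omega⟩ with him_def
  set ip : Fin n := ⟨(i : ℕ) + 1, by omega⟩ with hip_def
  -- basic value facts
  have hvm : v im < v i := hv (by simp only [him_def, Fin.lt_def]; omega)
  have hvp : v i < v ip := hv (by simp only [hip_def, Fin.lt_def]; omega)
  have hvmp : v im < v ip := hvm.trans hvp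
  have hPmp : P im = P ip := by
    have : ∀ a b c : Fin 2, a ≠ c → b ≠ c → a = b := by decide
    exact this _ _ _ hm1 hp1
  have hcc : P i ≠ P im := Ne.symm hm1
  -- coalitions
  have hiA : i ∈ coal P (P i) := by simp [coal]
  have himB : im ∈ coal P (P im) := by simp [coal]
  have hipB : ip ∈ coal P (P im) := by simp [coal, hPmp]
  have himA : im ∉ coal P (P i) := by simp [coal]; exact hm1
  have hipA : ip ∉ coal P (P i) := by simp [coal]; exact hp1
  have hiB : i ∉ coal P (P im) := by simp [coal]; exact hcc
  have himip : im ≠ ip := by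
    simp only [him_def, hip_def, ne_eq, Fin.mk.injEq]
    omega
  -- cardinalities
  have hcard1 : (coal P 1).card = n - m := by
    have hsplit := Finset.card_filter_add_card_filter_not
      (s := (Finset.univ : Finset (Fin n))) (p := fun j => P j = 0)
    have hfe : Finset.univ.filter (fun j => ¬ P j = 0) = coal P 1 := by
      apply Finset.filter_congr
      intro j _
      have : ∀ a : Fin 2, ¬ a = 0 ↔ a = 1 := by decide
      simp [this]
    rw [hfe] at hsplit
    have : (coal P 0).card + (coal P 1).card = n := by
      simpa [coal, Finset.card_univ] using hsplit
    omega
  have hn4 : m + 2 ≤ n := by omega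
  have h01' : ∀ a b : Fin 2, a ≠ b → (a = 0 ∧ b = 1) ∨ (a = 1 ∧ b = 0) := by decide
  have hA2 : 2 ≤ (coal P (P i)).card ∧ 2 ≤ (coal P (P im)).card := by
    rcases h01' _ _ hcc with ⟨h, h'⟩ | ⟨h, h'⟩
    · rw [h, h', hcard, hcard1]; exact ⟨hm2, by omega⟩
    · rw [h, h', hcard, hcard1]; exact ⟨by omega, hm2⟩
  obtain ⟨hA2, hB2⟩ := hA2
  -- the two swaps
  have hswapcard : ∀ (y : Fin n), P y = P im → y ∈ coal P (P im) →
      (coal (swapP P i y) 0).card = m ∧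
      coal (swapP P i y) (P i) = insert y ((coal P (P i)).erase i) ∧
      coal (swapP P i y) (P im) = insert i ((coal P (P im)).erase y) ∧
      (coal (swapP P i y) (P i)).card = (coal P (P i)).card ∧
      (coal (swapP P i y) (P im)).card = (coal P (P im)).card := by
    intro y hy hyB
    have hPiy : P i ≠ P y := hy ▸ hcc
    have hyA : y ∉ coal P (P i) := by simp [coal]; exact fun h => hPiy h.symm
    have hcl : coal (swapP P i y) (P i) = insert y ((coal P (P i)).erase i) := coal_swap_left P hPiy
    have hcr : coal (swapP P i y) (P im) = insert i ((coal P (P im)).erase y) := by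
      have := coal_swap_right P hPiy
      rwa [hy] at this
    have hcardl : (coal (swapP P i y) (P i)).card = (coal P (P i)).card := by
      rw [hcl, Finset.card_insert_of_notMem (fun h => hyA (Finset.mem_of_mem_erase h)),
        Finset.card_erase_add_one hiA]
    have hcardr : (coal (swapP P i y) (P im)).card = (coal P (P im)).card := by
      rw [hcr, Finset.card_insert_of_notMem (fun h => hiB (Finset.mem_of_mem_erase h)),
        Finset.card_erase_add_one hyB]
    refine ⟨?_, hcl, hcr, hcardl, hcardr⟩
    · have h01 : ∀ a b : Fin 2, a ≠ b → a = 0 ∨ b = 0 := by decide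
      rcases h01 _ _ hcc with h | h
      · rw [h] at hcardl; rw [hcardl]; exact hcard
      · rw [h] at hcardr; rw [hcardr]; exact hcard
  have hvalim : (im : ℕ) = (i : ℕ) - 1 := rfl
  have hvalip : (ip : ℕ) = (i : ℕ) + 1 := rfl
  -- real positivity of denominators
  have ha1 : (0:ℝ) < ((coal P (P i)).card : ℝ) - 1 := by
    have : (2:ℝ) ≤ ((coal P (P i)).card : ℝ) := by exact_mod_cast hA2
    linarith
  have hb1 : (0:ℝ) < ((coal P (P im)).card : ℝ) - 1 := by
    have : (2:ℝ) ≤ ((coal P (P im)).card : ℝ) := by exact_mod_cast hB2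
    linarith
  -- sums over Fin 2 split at the two coalition indices
  have hsum2 : ∀ f : Fin 2 → ℝ, ∑ c, f c = f (P i) + f (P im) := by
    intro f
    rcases h01' _ _ hcc with ⟨h, h'⟩ | ⟨h, h'⟩ <;> rw [h, h', Fin.sum_univ_two] <;> ring
  have hsplit : ∀ Q : Fin n → Fin 2, ∑ j, costAVG v Q j
      = Dsum v (coal Q (P i)) / (((coal Q (P i)).card : ℝ) - 1)
      + Dsum v (coal Q (P im)) / (((coal Q (P im)).card : ℝ) - 1) := by
    intro Q
    rw [sum_costAVG_eq]
    exact hsum2 _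
  -- the key inequality for a swap of i with y ∈ {im, ip}
  have hkey : ∀ y : Fin n, P y = P im → y ∈ coal P (P im) →
      0 ≤ 2 * ((∑ j ∈ (coal P (P i)).erase i, |v y - v j|)
        - ∑ j ∈ (coal P (P i)).erase i, |v i - v j|) / (((coal P (P i)).card : ℝ) - 1)
      + 2 * ((∑ j ∈ (coal P (P im)).erase y, |v i - v j|)
        - ∑ j ∈ (coal P (P im)).erase y, |v y - v j|) / (((coal P (P im)).card : ℝ) - 1) := by
    intro y hy hyB
    obtain ⟨hQcard, hcl, hcr, hcardl, hcardr⟩ := hswapcard y hy hyB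
    have hyA : y ∉ coal P (P i) := by
      simp only [coal, Finset.mem_filter, Finset.mem_univ, true_and, hy]
      exact fun h => hcc h.symm
    have hle := hopt (swapP P i y) hQcard
    rw [hsplit P, hsplit (swapP P i y), hcardl, hcardr, hcl, hcr,
      Dsum_insert v (fun h => hyA (Finset.mem_of_mem_erase h)),
      Dsum_insert v (fun h => hiB (Finset.mem_of_mem_erase h)),
      Dsum_erase v hiA, Dsum_erase v hyB] at hle
    ring_nf at hle ⊢
    linarith
  -- pointwise cancellation in coalition A
  have hptA : ∀ j ∈ (coal P (P i)).erase i,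
      (v ip - v i) * (|v im - v j| - |v i - v j|)
        + (v i - v im) * (|v ip - v j| - |v i - v j|) = 0 := by
    intro j hj
    obtain ⟨hji, hjA⟩ := Finset.mem_erase.mp hj
    have hjPc : P j = P i := by
      simpa only [coal, Finset.mem_filter, Finset.mem_univ, true_and] using hjA
    have hjim : j ≠ im := fun h => hm1 (h ▸ hjPc)
    have hjip : j ≠ ip := fun h => hp1 (h ▸ hjPc)
    have hv1 : (j:ℕ) ≠ (i:ℕ) := fun h => hji (Fin.ext h)
    have hv2 : (j:ℕ) ≠ (i:ℕ) - 1 := fun h => hjim (Fin.ext (by rw [hvalim]; exact h))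
    have hv3 : (j:ℕ) ≠ (i:ℕ) + 1 := fun h => hjip (Fin.ext (by rw [hvalip]; exact h))
    rcases (by omega : (j:ℕ) < (i:ℕ) - 1 ∨ (i:ℕ) + 1 < (j:ℕ)) with hlt | hgt
    · have h1 : v j < v im := hv (show j < im by rw [Fin.lt_def, hvalim]; omega)
      rw [abs_of_pos (show (0:ℝ) < v im - v j by linarith),
        abs_of_pos (show (0:ℝ) < v i - v j by linarith),
        abs_of_pos (show (0:ℝ) < v ip - v j by linarith)]
      ring
    · have h1 : v ip < v j := hv (show ip < j by rw [Fin.lt_def, hvalip]; omega)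
      rw [abs_of_neg (show v im - v j < 0 by linarith),
        abs_of_neg (show v i - v j < 0 by linarith),
        abs_of_neg (show v ip - v j < 0 by linarith)]
      ring
  -- pointwise cancellation in coalition B away from im, ip
  have hptB : ∀ j ∈ ((coal P (P im)).erase im).erase ip,
      (v ip - v i) * (|v i - v j| - |v im - v j|)
        + (v i - v im) * (|v i - v j| - |v ip - v j|) = 0 := by
    intro j hj
    obtain ⟨hjip, hj'⟩ := Finset.mem_erase.mp hj
    obtain ⟨hjim, hjB⟩ := Finset.mem_erase.mp hj'
    have hjPc : P j = P im := by
      simpa only [coal, Finset.mem_filter, Finset.mem_univ, true_and] using hjB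
    have hji : j ≠ i := fun h => hcc (h ▸ hjPc)
    have hv1 : (j:ℕ) ≠ (i:ℕ) := fun h => hji (Fin.ext h)
    have hv2 : (j:ℕ) ≠ (i:ℕ) - 1 := fun h => hjim (Fin.ext (by rw [hvalim]; exact h))
    have hv3 : (j:ℕ) ≠ (i:ℕ) + 1 := fun h => hjip (Fin.ext (by rw [hvalip]; exact h))
    rcases (by omega : (j:ℕ) < (i:ℕ) - 1 ∨ (i:ℕ) + 1 < (j:ℕ)) with hlt | hgt
    · have h1 : v j < v im := hv (show j < im by rw [Fin.lt_def, hvalim]; omega)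
      rw [abs_of_pos (show (0:ℝ) < v i - v j by linarith),
        abs_of_pos (show (0:ℝ) < v im - v j by linarith),
        abs_of_pos (show (0:ℝ) < v ip - v j by linarith)]
      ring
    · have h1 : v ip < v j := hv (show ip < j by rw [Fin.lt_def, hvalip]; omega)
      rw [abs_of_neg (show v i - v j < 0 by linarith),
        abs_of_neg (show v im - v j < 0 by linarith),
        abs_of_neg (show v ip - v j < 0 by linarith)]
      ring
  -- the combined A-sums vanish
  have hS : (v ip - v i) * ((∑ j ∈ (coal P (P i)).erase i, |v im - v j|)
        - ∑ j ∈ (coal P (P i)).erase i, |v i - v j|)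
      + (v i - v im) * ((∑ j ∈ (coal P (P i)).erase i, |v ip - v j|)
        - ∑ j ∈ (coal P (P i)).erase i, |v i - v j|) = 0 := by
    rw [← Finset.sum_sub_distrib, ← Finset.sum_sub_distrib, Finset.mul_sum, Finset.mul_sum,
      ← Finset.sum_add_distrib]
    exact Finset.sum_eq_zero hptA
  -- the combined B-sums equal -2*d*d'
  have hBim : (coal P (P im)).erase im = insert ip (((coal P (P im)).erase im).erase ip) :=
    (Finset.insert_erase (Finset.mem_erase.mpr ⟨himip.symm, hipB⟩)).symm
  have hBip : (coal P (P im)).erase ip = insert im (((coal P (P im)).erase im).erase ip) := by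
    rw [Finset.erase_right_comm]
    exact (Finset.insert_erase (Finset.mem_erase.mpr ⟨himip, himB⟩)).symm
  have hT : (v ip - v i) * ((∑ j ∈ (coal P (P im)).erase im, |v i - v j|)
        - ∑ j ∈ (coal P (P im)).erase im, |v im - v j|)
      + (v i - v im) * ((∑ j ∈ (coal P (P im)).erase ip, |v i - v j|)
        - ∑ j ∈ (coal P (P im)).erase ip, |v ip - v j|)
      = -2 * (v i - v im) * (v ip - v i) := by
    rw [← Finset.sum_sub_distrib, ← Finset.sum_sub_distrib, hBim, hBip,
      Finset.sum_insert (Finset.notMem_erase _ _),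
      Finset.sum_insert (fun h => (Finset.notMem_erase im _) (Finset.mem_of_mem_erase h))]
    have hcomb : (v ip - v i) * (∑ j ∈ ((coal P (P im)).erase im).erase ip,
          (|v i - v j| - |v im - v j|))
        + (v i - v im) * (∑ j ∈ ((coal P (P im)).erase im).erase ip,
          (|v i - v j| - |v ip - v j|)) = 0 := by
      rw [Finset.mul_sum, Finset.mul_sum, ← Finset.sum_add_distrib]
      exact Finset.sum_eq_zero hptB
    rw [abs_of_neg (show v i - v ip < 0 by linarith),
      abs_of_neg (show v im - v ip < 0 by linarith),
      abs_of_pos (show (0:ℝ) < v i - v im by linarith),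
      abs_of_pos (show (0:ℝ) < v ip - v im by linarith)]
    linear_combination hcomb
  -- final contradiction
  have hk1 := hkey im rfl himB
  have hk2 := hkey ip hPmp.symm hipB
  have e1 : (0:ℝ) ≤ (v ip - v i) * (2 * ((∑ j ∈ (coal P (P i)).erase i, |v im - v j|)
        - ∑ j ∈ (coal P (P i)).erase i, |v i - v j|) / (((coal P (P i)).card : ℝ) - 1)
      + 2 * ((∑ j ∈ (coal P (P im)).erase im, |v i - v j|)
        - ∑ j ∈ (coal P (P im)).erase im, |v im - v j|) / (((coal P (P im)).card : ℝ) - 1)) :=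
    mul_nonneg (by linarith) hk1
  have e2 : (0:ℝ) ≤ (v i - v im) * (2 * ((∑ j ∈ (coal P (P i)).erase i, |v ip - v j|)
        - ∑ j ∈ (coal P (P i)).erase i, |v i - v j|) / (((coal P (P i)).card : ℝ) - 1)
      + 2 * ((∑ j ∈ (coal P (P im)).erase ip, |v i - v j|)
        - ∑ j ∈ (coal P (P im)).erase ip, |v ip - v j|) / (((coal P (P im)).card : ℝ) - 1)) :=
    mul_nonneg (by linarith) hk2
  have hiden : (v ip - v i) * (2 * ((∑ j ∈ (coal P (P i)).erase i, |v im - v j|)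
        - ∑ j ∈ (coal P (P i)).erase i, |v i - v j|) / (((coal P (P i)).card : ℝ) - 1)
      + 2 * ((∑ j ∈ (coal P (P im)).erase im, |v i - v j|)
        - ∑ j ∈ (coal P (P im)).erase im, |v im - v j|) / (((coal P (P im)).card : ℝ) - 1))
      + (v i - v im) * (2 * ((∑ j ∈ (coal P (P i)).erase i, |v ip - v j|)
        - ∑ j ∈ (coal P (P i)).erase i, |v i - v j|) / (((coal P (P i)).card : ℝ) - 1)
      + 2 * ((∑ j ∈ (coal P (P im)).erase ip, |v i - v j|)
        - ∑ j ∈ (coal P (P im)).erase ip, |v ip - v j|) / (((coal P (P im)).card : ℝ) - 1))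
      = 2 * ((v ip - v i) * ((∑ j ∈ (coal P (P i)).erase i, |v im - v j|)
        - ∑ j ∈ (coal P (P i)).erase i, |v i - v j|)
      + (v i - v im) * ((∑ j ∈ (coal P (P i)).erase i, |v ip - v j|)
        - ∑ j ∈ (coal P (P i)).erase i, |v i - v j|)) / (((coal P (P i)).card : ℝ) - 1)
      + 2 * ((v ip - v i) * ((∑ j ∈ (coal P (P im)).erase im, |v i - v j|)
        - ∑ j ∈ (coal P (P im)).erase im, |v im - v j|)
      + (v i - v im) * ((∑ j ∈ (coal P (P im)).erase ip, |v i - v j|)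
        - ∑ j ∈ (coal P (P im)).erase ip, |v ip - v j|)) / (((coal P (P im)).card : ℝ) - 1) := by
    ring
  rw [hS, hT] at hiden
  have hneg : 2 * ((0:ℝ)) / (((coal P (P i)).card : ℝ) - 1)
      + 2 * (-2 * (v i - v im) * (v ip - v i)) / (((coal P (P im)).card : ℝ) - 1) < 0 := by
    have hpos : 0 < 2 * (2 * (v i - v im) * (v ip - v i)) / (((coal P (P im)).card : ℝ) - 1) := by
      apply div_pos
      · nlinarith
      · exact hb1
    rw [mul_zero, zero_div, zero_add]
    have : 2 * (-2 * (v i - v im) * (v ip - v i)) = -(2 * (2 * (v i - v im) * (v ip - v i))) := by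
      ring
    rw [this, neg_div]
    linarith
  linarith [e1, e2, hiden, hneg]
end
end
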